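/- arXiv:1411.2964 — 5 statements merged into one kernel-verified Lean document; each statement's English description precedes it below -/
import Mathlib

section
/- Let $m,\lambda>0$ satisfy $2\lambda m^{2}\geq 1$, and let $D_\lambda(t)=\int_0^\lambda (4\pi s)^{-1/2} e^{-t^2/(4s)-s m^2}\,ds$. Then there exists $t>0$ such that $D_\lambda(0) - 2e^{mt}D_\lambda(t) + e^{2mt}D_\lambda(2t) < 0$. (This is the failure of reflection positivity in space-time dimension $d=1$ of the Gaussian measure $d\mu_\lambda$ obtained from stochastic quantization of the free scalar field at finite stochastic time $\lambda$: the displayed quantity is the reflection-positivity form $\langle f, \vartheta D_\lambda f\rangle$ evaluated on the positive-time test function $f = \delta_0 - e^{mt}\delta_t$.) -/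
open MeasureTheory Real

open Set Filter Topology

/-!
Integrated over all stochastic times `s ∈ (0, ∞)`, the kernel gives the free covariance
`e^{-m|τ|}/(2m)`, on which the reflection form of `f = δ₀ - e^{mt} δ_t` vanishes identically.
So the form of `D_λ` is minus the form of the tail `∫_λ^∞`. Writing `k_τ(s)` for the integrand
of `D_λ(τ)`, `a = m t` and `b = t²/(4s)`, the integrand of the tail form is
`k_0(s) (1 - 2e^{a-b} + e^{2a-4b}) ≥ k_0(s) t² (m² - (1 + 5mt)/(2s))` once `2sm² ≥ 1`, while
`∫_λ^∞ k_0(s) (m² - 1/(2s)) ds > 0` because `2λm² ≥ 1`; hence the tail form is positive for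
small `t > 0`.
-/

noncomputable def gaussPrimitive (y : ℝ) : ℝ := ∫ x in (0:ℝ)..y, exp (-x ^ 2)

lemma hasDerivAt_gaussPrimitive (y : ℝ) : HasDerivAt gaussPrimitive (exp (-y ^ 2)) y :=
  ((by fun_prop : Continuous fun x : ℝ => exp (-x ^ 2)).integral_hasStrictDerivAt 0 y).hasDerivAt

lemma gaussPrimitive_neg (y : ℝ) : gaussPrimitive (-y) = -gaussPrimitive y := by
  have h := intervalIntegral.integral_comp_neg (a := 0) (b := y) fun x : ℝ => exp (-x ^ 2)
  simp only [neg_sq, neg_zero] at h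
  rw [gaussPrimitive, gaussPrimitive, h, intervalIntegral.integral_symm]

lemma tendsto_gaussPrimitive_atTop : Tendsto gaussPrimitive atTop (𝓝 (√π / 2)) := by
  have h := integral_gaussian_Ioi 1
  simp only [neg_mul, one_mul, div_one] at h
  rw [← h]
  exact intervalIntegral_tendsto_integral_Ioi 0
    (by simpa using (integrable_exp_neg_mul_sq one_pos).integrableOn) tendsto_id

lemma tendsto_gaussPrimitive_atBot : Tendsto gaussPrimitive atBot (𝓝 (-(√π / 2))) := by
  have h := (tendsto_gaussPrimitive_atTop.comp tendsto_neg_atBot_atTop).neg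
  refine h.congr fun y => ?_
  simp [gaussPrimitive_neg]

lemma integral_Ioi_of_hasDerivAt_of_nonneg_of_tendsto {f f' : ℝ → ℝ} {a la lb : ℝ}
    (hderiv : ∀ x ∈ Ioi a, HasDerivAt f (f' x) x) (hf' : ∀ x ∈ Ioi a, 0 ≤ f' x)
    (ha : Tendsto f (𝓝[>] a) (𝓝 la)) (hb : Tendsto f atTop (𝓝 lb)) :
    IntegrableOn f' (Ioi a) ∧ ∫ x in Ioi a, f' x = lb - la := by
  classical
  let g := Function.update f a la
  have hcont : ContinuousWithinAt g (Ici a) a :=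
    continuousWithinAt_update_same.2 (by rwa [Ici_sdiff_left])
  have hderiv' : ∀ x ∈ Ioi a, HasDerivAt g (f' x) x := fun x hx =>
    (hderiv x hx).congr_of_eventuallyEq <| by
      filter_upwards [Ioi_mem_nhds hx] with y hy using Function.update_of_ne hy.ne' _ _
  have hb' : Tendsto g atTop (𝓝 lb) := hb.congr' <| by
    filter_upwards [eventually_gt_atTop a] with y hy using (Function.update_of_ne hy.ne' _ _).symm
  refine ⟨integrableOn_Ioi_deriv_of_nonneg hcont hderiv' hf' hb', ?_⟩
  rw [integral_Ioi_of_hasDerivAt_of_nonneg hcont hderiv' hf' hb']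
  exact congrArg (lb - ·) (Function.update_self a la f)

lemma tendsto_sqrt_nhdsGT_zero : Tendsto (√·) (𝓝[>] 0) (𝓝[>] 0) :=
  tendsto_nhdsWithin_iff.2
    ⟨(continuous_sqrt.tendsto' 0 0 sqrt_zero).mono_left nhdsWithin_le_nhds,
      eventually_mem_nhdsWithin.mono fun _ hs => sqrt_pos.2 hs⟩

noncomputable def heatKernel (m t s : ℝ) : ℝ :=
  (4 * π * s) ^ (-(1:ℝ)/2) * exp (-t ^ 2 / (4 * s) - s * m ^ 2)

lemma heatKernel_pos (m t : ℝ) {s : ℝ} (hs : 0 < s) : 0 < heatKernel m t s := by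
  unfold heatKernel
  positivity

lemma heatKernel_eq_div (m t : ℝ) {s : ℝ} (hs : 0 < s) :
    heatKernel m t s = exp (-t ^ 2 / (4 * s) - s * m ^ 2) / (2 * √π * √s) := by
  have h4 : √(4 : ℝ) = 2 := by
    rw [show (4 : ℝ) = 2 ^ 2 by norm_num, sqrt_sq zero_le_two]
  rw [heatKernel, neg_div, rpow_neg (by positivity), ← sqrt_eq_rpow, sqrt_mul (by positivity),
    sqrt_mul zero_le_four, h4, inv_mul_eq_div]

lemma heatKernel_eq_mul_exp (m t s : ℝ) :
    heatKernel m t s = heatKernel m 0 s * exp (-(t ^ 2 / (4 * s))) := by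
  rw [heatKernel, heatKernel, mul_assoc ((4 * π * s) ^ (-(1:ℝ)/2)), ← exp_add]
  congr 2
  ring

/-- An antiderivative of `heatKernel m t` in the variable `r = √s`: the two Gaussian terms
differentiate correctly because `∓ m t + (m r ∓ t / (2 r))² = t² / (4 r²) + m² r²`. -/
noncomputable def heatKernelPrimitive (m t r : ℝ) : ℝ :=
  (exp (-(m * t)) * gaussPrimitive (m * r - t / (2 * r))
    + exp (m * t) * gaussPrimitive (m * r + t / (2 * r))) / (2 * m * √π)

lemma hasDerivAt_heatKernelPrimitive {m : ℝ} (hm : m ≠ 0) (t : ℝ) {r : ℝ} (hr : 0 < r) :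
    HasDerivAt (heatKernelPrimitive m t) (exp (-t ^ 2 / (4 * r ^ 2) - r ^ 2 * m ^ 2) / √π) r := by
  have hq : HasDerivAt (fun r => t / (2 * r)) (-(t / (2 * r ^ 2))) r := by
    refine (((hasDerivAt_inv hr.ne').const_mul (t / 2)).congr_deriv (by ring)).congr_of_eventuallyEq
      (.of_eq (funext fun y => ?_))
    ring
  have hu := (hasDerivAt_gaussPrimitive _).comp r (((hasDerivAt_id' r).const_mul m).sub hq)
  have hv := (hasDerivAt_gaussPrimitive _).comp r (((hasDerivAt_id' r).const_mul m).add hq)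
  refine (((hu.const_mul (exp (-(m * t)))).add (hv.const_mul (exp (m * t)))).div_const
    (2 * m * √π)).congr_deriv ?_
  have hpi : 0 < √π := sqrt_pos.2 pi_pos
  have e1 : exp (-(m * t)) * exp (-(m * r - t / (2 * r)) ^ 2)
      = exp (-t ^ 2 / (4 * r ^ 2) - r ^ 2 * m ^ 2) := by
    rw [← exp_add]; congr 1; field_simp; ring
  have e2 : exp (m * t) * exp (-(m * r + t / (2 * r)) ^ 2)
      = exp (-t ^ 2 / (4 * r ^ 2) - r ^ 2 * m ^ 2) := by
    rw [← exp_add]; congr 1; field_simp; ring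
  simp only [Pi.add_apply, Pi.sub_apply]
  rw [← mul_assoc, ← mul_assoc, e1, e2]
  field_simp
  ring

lemma hasDerivAt_heatKernelPrimitive_sqrt {m : ℝ} (hm : m ≠ 0) (t : ℝ) {s : ℝ} (hs : 0 < s) :
    HasDerivAt (fun s => heatKernelPrimitive m t √s) (heatKernel m t s) s := by
  refine ((hasDerivAt_heatKernelPrimitive hm t (sqrt_pos.2 hs)).comp s
    (hasDerivAt_sqrt hs.ne')).congr_deriv ?_
  have := sqrt_pos.2 hs
  rw [heatKernel_eq_div m t hs, sq_sqrt hs.le]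
  field_simp

lemma tendsto_heatKernelPrimitive_atTop {m : ℝ} (hm : 0 < m) (t : ℝ) :
    Tendsto (heatKernelPrimitive m t) atTop (𝓝 ((exp (-(m * t)) + exp (m * t)) / (4 * m))) := by
  have hmr : Tendsto (fun r => m * r) atTop atTop := tendsto_id.const_mul_atTop hm
  have hq : Tendsto (fun r => t / (2 * r)) atTop (𝓝 0) :=
    tendsto_const_nhds.div_atTop (tendsto_id.const_mul_atTop two_pos)
  have hu : Tendsto (fun r => m * r - t / (2 * r)) atTop atTop := by
    simpa only [sub_eq_add_neg] using hmr.atTop_add hq.neg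
  have h := ((((tendsto_gaussPrimitive_atTop.comp hu).const_mul (exp (-(m * t)))).add
    ((tendsto_gaussPrimitive_atTop.comp (hmr.atTop_add hq)).const_mul (exp (m * t)))).div_const
    (2 * m * √π))
  convert h using 2
  · rfl
  have := sqrt_pos.2 pi_pos
  field_simp
  ring

lemma tendsto_heatKernelPrimitive_nhdsGT_zero (m : ℝ) {t : ℝ} (ht : 0 ≤ t) :
    Tendsto (heatKernelPrimitive m t) (𝓝[>] 0)
      (𝓝 ((exp (m * t) - exp (-(m * t))) / (4 * m))) := by
  have hmr : Tendsto (fun r => m * r) (𝓝[>] 0) (𝓝 0) := by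
    simpa using ((continuous_const_mul m).tendsto 0).mono_left nhdsWithin_le_nhds
  rcases ht.eq_or_lt with rfl | ht
  · have hG : Tendsto gaussPrimitive (𝓝 0) (𝓝 0) := by
      simpa [gaussPrimitive] using (hasDerivAt_gaussPrimitive 0).continuousAt.tendsto
    convert ((hG.comp hmr).add (hG.comp hmr)).div_const (2 * m * √π) using 1
    · funext r; simp [heatKernelPrimitive]
    · simp
  have hq : Tendsto (fun r => t / (2 * r)) (𝓝[>] 0) atTop := by
    refine (tendsto_inv_nhdsGT_zero.const_mul_atTop (half_pos ht)).congr fun r => ?_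
    ring
  have hu : Tendsto (fun r => m * r - t / (2 * r)) (𝓝[>] 0) atBot := by
    refine (hmr.add_atBot (tendsto_neg_atTop_atBot.comp hq)).congr fun r => ?_
    simp [sub_eq_add_neg]
  have h := ((((tendsto_gaussPrimitive_atBot.comp hu).const_mul
    (exp (-(m * t)))).add ((tendsto_gaussPrimitive_atTop.comp (hmr.add_atTop hq)).const_mul
    (exp (m * t)))).div_const (2 * m * √π))
  convert h using 2
  · rfl
  have := sqrt_pos.2 pi_pos
  field_simp
  ring

theorem heatKernel_integrableOn_and_integral {m : ℝ} (hm : 0 < m) (t : ℝ) :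
    IntegrableOn (heatKernel m t) (Ioi 0) ∧
      ∫ s in Ioi 0, heatKernel m t s = exp (-(m * |t|)) / (2 * m) := by
  have habs : heatKernel m t = heatKernel m |t| := by
    funext s; simp only [heatKernel, sq_abs]
  rw [habs]
  convert integral_Ioi_of_hasDerivAt_of_nonneg_of_tendsto
    (fun s hs => hasDerivAt_heatKernelPrimitive_sqrt hm.ne' |t| hs)
    (fun s hs => (heatKernel_pos m |t| hs).le)
    ((tendsto_heatKernelPrimitive_nhdsGT_zero m (abs_nonneg t)).comp tendsto_sqrt_nhdsGT_zero)
    ((tendsto_heatKernelPrimitive_atTop hm |t|).comp tendsto_sqrt_atTop) using 2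
  ring

lemma intervalIntegral_heatKernel_eq {m : ℝ} (hm : 0 < m) (t : ℝ) {lam : ℝ} (hlam : 0 ≤ lam) :
    ∫ s in (0:ℝ)..lam, heatKernel m t s
      = exp (-(m * |t|)) / (2 * m) - ∫ s in Ioi lam, heatKernel m t s := by
  obtain ⟨hint, heq⟩ := heatKernel_integrableOn_and_integral hm t
  rw [intervalIntegral.integral_of_le hlam, ← heq, ← Ioc_union_Ioi_eq_Ioi hlam,
    setIntegral_union (Ioc_disjoint_Ioi le_rfl) measurableSet_Ioi
      (hint.mono_set Ioc_subset_Ioi_self) (hint.mono_set (Ioi_subset_Ioi hlam))]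
  ring

lemma sq_sub_le_one_sub_two_exp_add_exp {a b : ℝ} (hb : 0 ≤ b) (hba : b ≤ a) (ha : a ≤ 1 / 4) :
    a ^ 2 - 2 * b - 10 * a * b ≤ 1 - 2 * exp (a - b) + exp (2 * a - 4 * b) := by
  set E := exp (a - b)
  have hE : a - b + 1 ≤ E := add_one_le_exp _
  have hsplit : exp (2 * a - 4 * b) = E ^ 2 * exp (-(2 * b)) := by
    rw [← exp_nat_mul, ← exp_add]; push_cast; ring_nf
  have hb2 : 1 - 2 * b ≤ exp (-(2 * b)) := by linarith [add_one_le_exp (-(2 * b))]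
  have hE2 : E ^ 2 ≤ 1 + 4 * a := by
    calc E ^ 2 = exp (2 * (a - b)) := by rw [← exp_nat_mul]; push_cast; ring_nf
      _ ≤ exp (2 * a) := exp_le_exp.2 (by linarith)
      _ ≤ 1 / (1 - 2 * a) := exp_bound_div_one_sub_of_interval (by linarith) (by linarith)
      _ ≤ 1 + 4 * a := by
        rw [div_le_iff₀ (by linarith)]; nlinarith
  rw [hsplit]
  nlinarith [mul_le_mul_of_nonneg_left hb2 (sq_nonneg E), mul_le_mul_of_nonneg_left hE2 hb]

/-- `⟨f, ϑ K f⟩` for a translation-invariant kernel `K` and `f = δ₀ - e^{m t} δ_t`. -/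
noncomputable def reflectionForm (K : ℝ → ℝ) (m t : ℝ) : ℝ :=
  K 0 - 2 * exp (m * t) * K t + exp (2 * m * t) * K (2 * t)

lemma reflectionForm_sub (K L : ℝ → ℝ) (m t : ℝ) :
    reflectionForm (fun τ => K τ - L τ) m t = reflectionForm K m t - reflectionForm L m t := by
  simp only [reflectionForm]
  ring

lemma reflectionForm_exp_neg_abs (m c : ℝ) {t : ℝ} (ht : 0 ≤ t) :
    reflectionForm (fun τ => exp (-(m * |τ|)) / c) m t = 0 := by
  have h1 : exp (m * t) * exp (-(m * t)) = 1 := by rw [← exp_add]; simp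
  have h2 : exp (2 * m * t) * exp (-(m * (2 * t))) = 1 := by rw [← exp_add]; ring_nf; simp
  simp only [reflectionForm, abs_zero, abs_of_nonneg ht, abs_of_nonneg (by linarith : 0 ≤ 2 * t)]
  rw [mul_div_assoc', mul_div_assoc', mul_assoc, h1, h2, mul_zero, neg_zero, exp_zero]
  ring

lemma integrable_reflectionForm {α : Type*} [MeasurableSpace α] {μ : Measure α} {K : ℝ → α → ℝ}
    (hK : ∀ τ, Integrable (K τ) μ) (m t : ℝ) :
    Integrable (fun x => reflectionForm (K · x) m t) μ :=
  ((hK 0).sub ((hK t).const_mul _)).add ((hK _).const_mul _)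

lemma integral_reflectionForm {α : Type*} [MeasurableSpace α] {μ : Measure α} {K : ℝ → α → ℝ}
    (hK : ∀ τ, Integrable (K τ) μ) (m t : ℝ) :
    ∫ x, reflectionForm (K · x) m t ∂μ = reflectionForm (fun τ => ∫ x, K τ x ∂μ) m t := by
  have hK' : ∀ τ c, Integrable (fun x => c * K τ x) μ := fun τ c => (hK τ).const_mul c
  have hK'' : Integrable (fun x => K 0 x - 2 * exp (m * t) * K t x) μ := (hK 0).sub (hK' t _)
  simp only [reflectionForm]
  rw [integral_add hK'' (hK' _ _), integral_sub (hK 0) (hK' t _), integral_const_mul,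
    integral_const_mul]

lemma reflectionForm_heatKernel (m t s : ℝ) :
    reflectionForm (heatKernel m · s) m t = heatKernel m 0 s *
      (1 - 2 * exp (m * t - t ^ 2 / (4 * s)) + exp (2 * (m * t) - 4 * (t ^ 2 / (4 * s)))) := by
  have e1 : exp (m * t - t ^ 2 / (4 * s)) = exp (m * t) * exp (-(t ^ 2 / (4 * s))) := by
    rw [← exp_add]; ring_nf
  have e2 : exp (2 * (m * t) - 4 * (t ^ 2 / (4 * s)))
      = exp (2 * m * t) * exp (-((2 * t) ^ 2 / (4 * s))) := by
    rw [← exp_add]; ring_nf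
  rw [reflectionForm, heatKernel_eq_mul_exp m t, heatKernel_eq_mul_exp m (2 * t), e1, e2]
  ring

lemma reflectionForm_heatKernel_ge {m t s : ℝ} (hm : 0 ≤ m) (hs : 1 ≤ 2 * m ^ 2 * s)
    (ht : 0 ≤ t) (hmt : m * t ≤ 1 / 4) :
    t ^ 2 * (m ^ 2 * heatKernel m 0 s - (1 + 5 * m * t) * (heatKernel m 0 s / (2 * s)))
      ≤ reflectionForm (heatKernel m · s) m t := by
  have hs0 : 0 < s := by nlinarith [sq_nonneg m]
  have hba : t ^ 2 / (4 * s) ≤ m * t := by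
    rw [div_le_iff₀ (by positivity)]
    nlinarith [mul_le_mul_of_nonneg_left hs (sq_nonneg t),
      mul_le_mul_of_nonneg_right hmt (by positivity : 0 ≤ 2 * s * (m * t))]
  have key := sq_sub_le_one_sub_two_exp_add_exp (by positivity) hba hmt
  rw [reflectionForm_heatKernel]
  calc _ = heatKernel m 0 s * ((m * t) ^ 2 - 2 * (t ^ 2 / (4 * s))
        - 10 * (m * t) * (t ^ 2 / (4 * s))) := by field_simp; ring
    _ ≤ _ := mul_le_mul_of_nonneg_left key (heatKernel_pos m 0 hs0).le

lemma integrableOn_Ioi_heatKernel {m : ℝ} (hm : 0 < m) (t : ℝ) {lam : ℝ} (hlam : 0 ≤ lam) :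
    IntegrableOn (heatKernel m t) (Ioi lam) :=
  (heatKernel_integrableOn_and_integral hm t).1.mono_set (Ioi_subset_Ioi hlam)

lemma integrableOn_Ioi_heatKernel_div {m : ℝ} (hm : 0 < m) {lam : ℝ} (hlam : 0 < lam) :
    IntegrableOn (fun s => heatKernel m 0 s / (2 * s)) (Ioi lam) := by
  have hbound : ∀ᵐ s ∂volume.restrict (Ioi lam), ‖(2 * s)⁻¹‖ ≤ (2 * lam)⁻¹ := by
    filter_upwards [ae_restrict_mem measurableSet_Ioi] with s hs
    rw [norm_inv, norm_of_nonneg (by linarith [mem_Ioi.1 hs])]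
    exact inv_anti₀ (by positivity) (by linarith [mem_Ioi.1 hs])
  rw [IntegrableOn]
  simpa only [div_eq_mul_inv] using (integrableOn_Ioi_heatKernel hm 0 hlam.le).mul_bdd
    (by fun_prop : Measurable fun s : ℝ => (2 * s)⁻¹).aestronglyMeasurable hbound

lemma integral_Ioi_heatKernel_div_lt {m lam : ℝ} (hm : 0 < m) (hlam : 0 < lam)
    (hcond : 1 ≤ 2 * lam * m ^ 2) :
    ∫ s in Ioi lam, heatKernel m 0 s / (2 * s) < m ^ 2 * ∫ s in Ioi lam, heatKernel m 0 s := by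
  have hk := (integrableOn_Ioi_heatKernel hm 0 hlam.le).const_mul (m ^ 2)
  have hw := integrableOn_Ioi_heatKernel_div hm hlam
  have hpos : ∀ s ∈ Ioi lam, 0 < m ^ 2 * heatKernel m 0 s - heatKernel m 0 s / (2 * s) := by
    intro s hs
    have hs0 : 0 < s := hlam.trans hs
    have hlt : 1 / (2 * s) < m ^ 2 := by
      rw [div_lt_iff₀ (by positivity)]; nlinarith [mem_Ioi.1 hs]
    calc 0 < (m ^ 2 - 1 / (2 * s)) * heatKernel m 0 s :=
          mul_pos (sub_pos.2 hlt) (heatKernel_pos m 0 hs0)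
      _ = _ := by ring
  have hI : 0 < ∫ s in Ioi lam, (m ^ 2 * heatKernel m 0 s - heatKernel m 0 s / (2 * s)) := by
    refine (setIntegral_pos_iff_support_of_nonneg_ae ?_ (hk.sub hw)).2 ?_
    · filter_upwards [ae_restrict_mem measurableSet_Ioi] with s hs using (hpos s hs).le
    · calc (0 : ENNReal) < volume (Ioi lam) := by simp
        _ ≤ _ := measure_mono fun s hs => show s ∈ _ ∩ _ from ⟨(hpos s hs).ne', hs⟩
  rw [integral_sub hk hw, integral_const_mul] at hI
  linarith

lemma le_integral_Ioi_reflectionForm_heatKernel {m lam t : ℝ} (hm : 0 < m) (hlam : 0 < lam)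
    (hcond : 1 ≤ 2 * lam * m ^ 2) (ht : 0 ≤ t) (hmt : m * t ≤ 1 / 4) :
    t ^ 2 * (m ^ 2 * (∫ s in Ioi lam, heatKernel m 0 s)
        - (1 + 5 * m * t) * ∫ s in Ioi lam, heatKernel m 0 s / (2 * s))
      ≤ ∫ s in Ioi lam, reflectionForm (heatKernel m · s) m t := by
  have hk := fun τ => integrableOn_Ioi_heatKernel hm τ hlam.le
  have hw := integrableOn_Ioi_heatKernel_div hm hlam
  rw [← integral_const_mul, ← integral_const_mul, ← integral_sub ((hk 0).const_mul _)
    (hw.const_mul _), ← integral_const_mul]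
  refine setIntegral_mono_on ((((hk 0).const_mul _).sub (hw.const_mul _)).const_mul _)
    (integrable_reflectionForm hk m t) measurableSet_Ioi fun s hs => ?_
  refine reflectionForm_heatKernel_ge hm.le ?_ ht hmt
  nlinarith [mem_Ioi.1 hs]

/-- Failure of reflection positivity in space-time dimension `d = 1` for the
Gaussian measure obtained by stochastic quantization of the free scalar field
at finite stochastic time `λ`, for `2 λ m² ≥ 1`. -/
theorem stmt_0 (m lam : ℝ) (hm : 0 < m) (hlam : 0 < lam)
    (hcond : 1 ≤ 2 * lam * m ^ 2)
    (D : ℝ → ℝ)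
    (hD : ∀ t : ℝ, D t =
      ∫ s in (0:ℝ)..lam, (4 * π * s) ^ (-(1:ℝ)/2) * Real.exp (-t ^ 2 / (4 * s) - s * m ^ 2)) :
    ∃ t : ℝ, 0 < t ∧
      D 0 - 2 * Real.exp (m * t) * D t + Real.exp (2 * m * t) * D (2 * t) < 0 := by
  set J := ∫ s in Ioi lam, heatKernel m 0 s
  set W := ∫ s in Ioi lam, heatKernel m 0 s / (2 * s)
  have hWJ : W < m ^ 2 * J := integral_Ioi_heatKernel_div_lt hm hlam hcond
  obtain ⟨t, ht, hmt, hsmall⟩ : ∃ t, 0 < t ∧ m * t ≤ 1 / 4 ∧ 5 * m * t * W < m ^ 2 * J - W := by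
    have h1 : ∀ᶠ t in 𝓝 0, m * t < 1 / 4 :=
      ((continuous_const_mul m).tendsto' 0 0 (mul_zero m)).eventually_lt_const (by norm_num)
    have h2 : ∀ᶠ t in 𝓝 0, 5 * m * t * W < m ^ 2 * J - W :=
      ((by fun_prop : Continuous fun t => 5 * m * t * W).tendsto' 0 0 (by ring)).eventually_lt_const
        (by linarith)
    obtain ⟨t, ⟨h1, h2⟩, ht⟩ := (((h1.and h2).filter_mono nhdsWithin_le_nhds).and
      (self_mem_nhdsWithin : Ioi (0:ℝ) ∈ 𝓝[>] 0)).exists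
    exact ⟨t, ht, h1.le, h2⟩
  refine ⟨t, ht, ?_⟩
  have hDtail : D = fun τ => exp (-(m * |τ|)) / (2 * m) - ∫ s in Ioi lam, heatKernel m τ s :=
    funext fun τ => (hD τ).trans (intervalIntegral_heatKernel_eq hm τ hlam.le)
  change reflectionForm D m t < 0
  rw [hDtail, reflectionForm_sub, reflectionForm_exp_neg_abs m _ ht.le,
    ← integral_reflectionForm fun τ => integrableOn_Ioi_heatKernel hm τ hlam.le]
  have hlow : t ^ 2 * (m ^ 2 * J - (1 + 5 * m * t) * W) ≤ _ :=
    le_integral_Ioi_reflectionForm_heatKernel hm hlam hcond ht.le hmt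
  have hpos : 0 < t ^ 2 * (m ^ 2 * J - (1 + 5 * m * t) * W) := mul_pos (by positivity) (by linarith)
  linarith
end

section
/- For every $\lambda>0$, the function $F_\lambda(t) = \tfrac12\big(W_\lambda(0) + e^{2t}W_\lambda(2t)\big) - e^{t}W_\lambda(t)$ is twice differentiable at $0$ with $F_\lambda''(0) = W_\lambda(0) + W_\lambda''(0) = c_\lambda + \big(1-\tfrac{1}{2\lambda}\big)W_\lambda(0)$; consequently, if $\lambda\geq\tfrac12$ then $F_\lambda''(0)>0$. -/
/-!
`W` is the heat-semigroup smoothing of `e^{-|u|}` by the Gaussian `exp (-s² / (4λ))`, whose first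
two derivatives are bounded; hence `W` may be differentiated twice under the integral sign, with
`e^{-|u|}` as dominating function.

With `f t = e^t W t`, `F t = ½ (f 0 + f (2t)) - f t` is the midpoint convexity defect of `f`, so
`F''(0) = 2 f''(0) - f''(0) = f''(0) = W 0 + 2 W'(0) + W''(0)`. Here `W'(0) = 0` because `W` is
even, and `W''(0) = ∫ (u² / (4λ²) - 1 / (2λ)) e^{-u²/(4λ) - |u|} du = c - W 0 / (2λ)`.
For `λ ≥ ½` this gives `F''(0) = c + (1 - 1/(2λ)) W 0 ≥ c > 0`.
-/

open MeasureTheory Real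

theorem integrable_comp_sub_mul {φ ψ : ℝ → ℝ} {C : ℝ} (hφ : Continuous φ)
    (hC : ∀ s, ‖φ s‖ ≤ C) (hψ : Integrable ψ) (t : ℝ) :
    Integrable fun u => φ (t - u) * ψ u :=
  hψ.bdd_mul (hφ.comp (continuous_sub_left t)).aestronglyMeasurable (ae_of_all _ fun _ => hC _)

theorem hasDerivAt_integral_comp_sub_mul {φ φ' ψ : ℝ → ℝ} {C C' : ℝ}
    (hφ : ∀ s, HasDerivAt φ (φ' s) s) (hC : ∀ s, ‖φ s‖ ≤ C)
    (hφ' : Continuous φ') (hC' : ∀ s, ‖φ' s‖ ≤ C') (hψ : Integrable ψ) (t : ℝ) :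
    HasDerivAt (fun t => ∫ u, φ (t - u) * ψ u) (∫ u, φ' (t - u) * ψ u) t := by
  have hφc : Continuous φ := continuous_iff_continuousAt.2 fun s => (hφ s).continuousAt
  refine (hasDerivAt_integral_of_dominated_loc_of_deriv_le (bound := fun u => C' * ‖ψ u‖)
    (F' := fun t u => φ' (t - u) * ψ u)
    Filter.univ_mem (Filter.Eventually.of_forall fun t =>
      (integrable_comp_sub_mul hφc hC hψ t).aestronglyMeasurable)
    (integrable_comp_sub_mul hφc hC hψ t)
    (integrable_comp_sub_mul hφ' hC' hψ t).aestronglyMeasurable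
    (ae_of_all _ fun u s _ => ?_) (hψ.norm.const_mul C')
    (ae_of_all _ fun u s _ => ?_)).2
  · rw [norm_mul]
    exact mul_le_mul_of_nonneg_right (hC' _) (norm_nonneg _)
  · simpa using ((hφ (s - u)).comp s ((hasDerivAt_id s).sub_const u)).mul_const (ψ u)

theorem integral_eq_zero_of_odd {f : ℝ → ℝ} (hf : ∀ x, f (-x) = -f x) : ∫ x, f x = 0 := by
  have h := integral_neg_eq_self f volume
  simp only [hf, integral_neg] at h
  linarith

theorem integrable_exp_neg_abs : Integrable fun u : ℝ => exp (-|u|) := by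
  refine (integrable_inv_one_add_sq.const_mul 2).mono' (by fun_prop)
    (ae_of_all _ fun u => ?_)
  have h := quadratic_le_exp_of_nonneg (abs_nonneg u)
  rw [norm_of_nonneg (exp_pos _).le, exp_neg, sq_abs] at *
  rw [← div_eq_mul_inv, inv_le_comm₀ (exp_pos _) (by positivity), inv_div]
  nlinarith [abs_nonneg u]

noncomputable def gaussKernel (lam s : ℝ) : ℝ := exp (-s ^ 2 / (4 * lam))

noncomputable def gaussKernelDeriv (lam s : ℝ) : ℝ := -(s / (2 * lam)) * gaussKernel lam s

noncomputable def gaussKernelDeriv2 (lam s : ℝ) : ℝ :=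
  (s ^ 2 / (4 * lam ^ 2) - 1 / (2 * lam)) * gaussKernel lam s

section GaussKernel

variable {lam : ℝ}

theorem hasDerivAt_gaussKernel (lam s : ℝ) :
    HasDerivAt (gaussKernel lam) (gaussKernelDeriv lam s) s := by
  have h := ((((hasDerivAt_id s).fun_pow 2).fun_neg).div_const (4 * lam)).exp
  refine h.congr_deriv ?_
  simp only [gaussKernelDeriv, gaussKernel, id]
  ring

theorem hasDerivAt_gaussKernelDeriv (lam s : ℝ) :
    HasDerivAt (gaussKernelDeriv lam) (gaussKernelDeriv2 lam s) s := by
  have h := (((hasDerivAt_id s).div_const (2 * lam)).fun_neg).fun_mul (hasDerivAt_gaussKernel lam s)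
  refine h.congr_deriv ?_
  simp only [gaussKernelDeriv2, gaussKernelDeriv, id]
  ring

theorem continuous_gaussKernel (lam : ℝ) : Continuous (gaussKernel lam) := by
  unfold gaussKernel
  fun_prop

theorem continuous_gaussKernelDeriv2 (lam : ℝ) : Continuous (gaussKernelDeriv2 lam) := by
  unfold gaussKernelDeriv2 gaussKernel
  fun_prop

theorem gaussKernel_pos (lam s : ℝ) : 0 < gaussKernel lam s := exp_pos _

theorem gaussKernel_even (lam s : ℝ) : gaussKernel lam (-s) = gaussKernel lam s := by
  rw [gaussKernel, gaussKernel, neg_sq]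

theorem gaussKernelDeriv_neg (lam s : ℝ) :
    gaussKernelDeriv lam (-s) = -gaussKernelDeriv lam s := by
  rw [gaussKernelDeriv, gaussKernelDeriv, gaussKernel_even]
  ring

theorem sq_div_mul_gaussKernel_eq (lam s : ℝ) :
    s ^ 2 / (4 * lam ^ 2) * gaussKernel lam s
      = gaussKernelDeriv2 lam s + 1 / (2 * lam) * gaussKernel lam s := by
  rw [gaussKernelDeriv2]
  ring

theorem gaussKernel_le_one (hlam : 0 < lam) (s : ℝ) : gaussKernel lam s ≤ 1 := by
  rw [gaussKernel, exp_le_one_iff, neg_div, neg_nonpos]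
  positivity

theorem sq_div_mul_gaussKernel_le_one (lam s : ℝ) :
    s ^ 2 / (4 * lam) * gaussKernel lam s ≤ 1 := by
  set y := s ^ 2 / (4 * lam)
  have hy : gaussKernel lam s = exp (-y) := by rw [gaussKernel, neg_div]
  calc y * gaussKernel lam s ≤ exp y * exp (-y) := by
        rw [hy]; gcongr; linarith [add_one_le_exp y]
    _ = 1 := by rw [← exp_add, add_neg_cancel, exp_zero]

theorem norm_gaussKernel_le (hlam : 0 < lam) (s : ℝ) : ‖gaussKernel lam s‖ ≤ 1 := by
  rw [norm_of_nonneg (gaussKernel_pos lam s).le]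
  exact gaussKernel_le_one hlam s

theorem norm_gaussKernelDeriv_le (hlam : 0 < lam) (s : ℝ) :
    ‖gaussKernelDeriv lam s‖ ≤ 1 / (2 * lam) + 2 := by
  have h1 := gaussKernel_le_one hlam s
  have h2 := sq_div_mul_gaussKernel_le_one lam s
  have hφ := gaussKernel_pos lam s
  have habs : |s| ≤ 1 + s ^ 2 := by nlinarith [sq_abs s, abs_nonneg s]
  rw [gaussKernelDeriv, norm_mul, norm_neg, norm_div, norm_of_nonneg hφ.le,
    Real.norm_eq_abs, norm_of_nonneg (by positivity : 0 ≤ 2 * lam)]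
  calc |s| / (2 * lam) * gaussKernel lam s
      ≤ (1 + s ^ 2) / (2 * lam) * gaussKernel lam s := by gcongr
    _ = 1 / (2 * lam) * gaussKernel lam s + 2 * (s ^ 2 / (4 * lam) * gaussKernel lam s) := by
        field_simp; ring
    _ ≤ 1 / (2 * lam) * 1 + 2 * 1 := by gcongr
    _ = 1 / (2 * lam) + 2 := by ring

theorem norm_gaussKernelDeriv2_le (hlam : 0 < lam) (s : ℝ) :
    ‖gaussKernelDeriv2 lam s‖ ≤ 1 / lam + 1 / (2 * lam) := by
  have h1 := gaussKernel_le_one hlam s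
  have h2 := sq_div_mul_gaussKernel_le_one lam s
  have hφ := gaussKernel_pos lam s
  rw [gaussKernelDeriv2, Real.norm_eq_abs]
  have e : (s ^ 2 / (4 * lam ^ 2) - 1 / (2 * lam)) * gaussKernel lam s
      = 1 / lam * (s ^ 2 / (4 * lam) * gaussKernel lam s) - 1 / (2 * lam) * gaussKernel lam s := by
    field_simp
  rw [e, abs_sub_le_iff]
  have h3 : 0 ≤ 1 / lam * (s ^ 2 / (4 * lam) * gaussKernel lam s) := by positivity
  have h4 : 0 ≤ 1 / (2 * lam) * gaussKernel lam s := by positivity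
  have h5 := mul_le_mul_of_nonneg_left h2 (one_div_pos.2 hlam).le
  have h6 := mul_le_mul_of_nonneg_left h1 (one_div_pos.2 (by positivity : 0 < 2 * lam)).le
  constructor <;> linarith

end GaussKernel

section MidpointDefect

variable {f f' f'' F : ℝ → ℝ}

theorem hasDerivAt_exp_mul {W W' : ℝ → ℝ} (hW : ∀ t, HasDerivAt W (W' t) t) (t : ℝ) :
    HasDerivAt (fun t => exp t * W t) (exp t * (W t + W' t)) t :=
  ((hasDerivAt_exp t).mul (hW t)).congr_deriv (by ring)

theorem hasDerivAt_of_eq_midpoint_sub (hf : ∀ t, HasDerivAt f (f' t) t)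
    (hF : ∀ t, F t = 1 / 2 * (f 0 + f (2 * t)) - f t) (t : ℝ) :
    HasDerivAt F (f' (2 * t) - f' t) t := by
  have h2t : HasDerivAt (fun s : ℝ => 2 * s) 2 t := by
    simpa using (hasDerivAt_id t).const_mul 2
  have h := (((hf (2 * t)).comp t h2t).const_add (f 0)).const_mul (1 / 2) |>.sub (hf t)
  rw [show F = _ from funext hF]
  exact h.congr_deriv (by ring)

theorem hasDerivAt_deriv_of_eq_midpoint_sub (hf : ∀ t, HasDerivAt f (f' t) t)
    (hf' : ∀ t, HasDerivAt f' (f'' t) t) (hF : ∀ t, F t = 1 / 2 * (f 0 + f (2 * t)) - f t)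
    (t : ℝ) : HasDerivAt (deriv F) (2 * f'' (2 * t) - f'' t) t := by
  have h2t : HasDerivAt (fun s : ℝ => 2 * s) 2 t := by
    simpa using (hasDerivAt_id t).const_mul 2
  rw [show deriv F = _ from funext fun s => (hasDerivAt_of_eq_midpoint_sub hf hF s).deriv]
  exact (((hf' (2 * t)).comp t h2t).sub (hf' t)).congr_deriv (by ring)

end MidpointDefect

section SmoothedLaplaceDensity

variable {lam : ℝ}

theorem exp_sub_abs_eq_gaussKernel_mul (lam t u : ℝ) :
    exp (-(t - u) ^ 2 / (4 * lam) - |u|) = gaussKernel lam (t - u) * exp (-|u|) := by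
  rw [gaussKernel, ← exp_add, sub_eq_add_neg]

theorem hasDerivAt_integral_exp_sub_abs (hlam : 0 < lam) (t : ℝ) :
    HasDerivAt (fun t => ∫ u, exp (-(t - u) ^ 2 / (4 * lam) - |u|))
      (∫ u, gaussKernelDeriv lam (t - u) * exp (-|u|)) t := by
  simp only [exp_sub_abs_eq_gaussKernel_mul]
  exact hasDerivAt_integral_comp_sub_mul (hasDerivAt_gaussKernel lam) (norm_gaussKernel_le hlam)
    (continuous_iff_continuousAt.2 fun s => (hasDerivAt_gaussKernelDeriv lam s).continuousAt)
    (norm_gaussKernelDeriv_le hlam) integrable_exp_neg_abs t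

theorem hasDerivAt_integral_gaussKernelDeriv_mul (hlam : 0 < lam) (t : ℝ) :
    HasDerivAt (fun t => ∫ u, gaussKernelDeriv lam (t - u) * exp (-|u|))
      (∫ u, gaussKernelDeriv2 lam (t - u) * exp (-|u|)) t :=
  hasDerivAt_integral_comp_sub_mul (hasDerivAt_gaussKernelDeriv lam) (norm_gaussKernelDeriv_le hlam)
    (continuous_gaussKernelDeriv2 lam) (norm_gaussKernelDeriv2_le hlam) integrable_exp_neg_abs t

theorem integral_gaussKernelDeriv_mul_exp_neg_abs (lam : ℝ) :
    ∫ u, gaussKernelDeriv lam (0 - u) * exp (-|u|) = 0 :=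
  integral_eq_zero_of_odd fun u => by
    rw [show (0 : ℝ) - -u = -(0 - u) by ring, gaussKernelDeriv_neg, abs_neg, neg_mul]

theorem integrable_gaussKernel_mul_exp_neg_abs (hlam : 0 < lam) (t : ℝ) :
    Integrable fun u => gaussKernel lam (t - u) * exp (-|u|) :=
  integrable_comp_sub_mul (continuous_gaussKernel lam) (norm_gaussKernel_le hlam)
    integrable_exp_neg_abs t

theorem integrable_gaussKernelDeriv2_mul_exp_neg_abs (hlam : 0 < lam) (t : ℝ) :
    Integrable fun u => gaussKernelDeriv2 lam (t - u) * exp (-|u|) :=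
  integrable_comp_sub_mul (continuous_gaussKernelDeriv2 lam) (norm_gaussKernelDeriv2_le hlam)
    integrable_exp_neg_abs t

theorem sq_mul_exp_sub_abs_eq (hlam : lam ≠ 0) (u : ℝ) :
    u ^ 2 * exp (-u ^ 2 / (4 * lam) - |u|) = 4 * lam ^ 2 *
      (gaussKernelDeriv2 lam (0 - u) * exp (-|u|)
        + 1 / (2 * lam) * (gaussKernel lam (0 - u) * exp (-|u|))) := by
  calc u ^ 2 * exp (-u ^ 2 / (4 * lam) - |u|)
      = 4 * lam ^ 2 * ((0 - u) ^ 2 / (4 * lam ^ 2) * gaussKernel lam (0 - u)) * exp (-|u|) := by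
        rw [← neg_sq, ← zero_sub, exp_sub_abs_eq_gaussKernel_mul]
        field_simp
    _ = _ := by
        rw [sq_div_mul_gaussKernel_eq]
        ring

theorem integrable_sq_mul_exp_sub_abs (hlam : 0 < lam) :
    Integrable fun u : ℝ => u ^ 2 * exp (-u ^ 2 / (4 * lam) - |u|) := by
  simp only [sq_mul_exp_sub_abs_eq hlam.ne']
  exact ((integrable_gaussKernelDeriv2_mul_exp_neg_abs hlam 0).add
    ((integrable_gaussKernel_mul_exp_neg_abs hlam 0).const_mul _)).const_mul _

theorem integral_sq_mul_exp_sub_abs_pos (hlam : 0 < lam) :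
    0 < ∫ u : ℝ, u ^ 2 * exp (-u ^ 2 / (4 * lam) - |u|) :=
  integral_pos_of_integrable_nonneg_nonzero (x := 1) (by fun_prop)
    (integrable_sq_mul_exp_sub_abs hlam) (fun u => by positivity) (by positivity)

theorem one_div_mul_integral_sq_mul_exp_sub_abs (hlam : 0 < lam) :
    1 / (4 * lam ^ 2) * ∫ u : ℝ, u ^ 2 * exp (-u ^ 2 / (4 * lam) - |u|)
      = (∫ u, gaussKernelDeriv2 lam (0 - u) * exp (-|u|))
        + (∫ u, exp (-(0 - u) ^ 2 / (4 * lam) - |u|)) / (2 * lam) := by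
  simp only [sq_mul_exp_sub_abs_eq hlam.ne', exp_sub_abs_eq_gaussKernel_mul]
  rw [integral_const_mul, integral_add (integrable_gaussKernelDeriv2_mul_exp_neg_abs hlam 0)
    ((integrable_gaussKernel_mul_exp_neg_abs hlam 0).const_mul _), integral_const_mul]
  field_simp

end SmoothedLaplaceDensity

/-- `F_λ` is twice differentiable at `0` with
`F_λ''(0) = W_λ(0) + W_λ''(0) = c_λ + (1 - 1/(2λ)) W_λ(0)`; consequently,
if `λ ≥ 1/2` then `F_λ''(0) > 0`. -/
theorem stmt_8 (lam : ℝ) (hlam : 0 < lam)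
    (W : ℝ → ℝ)
    (hW : ∀ t : ℝ, W t = ∫ u : ℝ, Real.exp (-(t - u) ^ 2 / (4 * lam) - |u|))
    (c : ℝ)
    (hc : c = (1 / (4 * lam ^ 2)) * ∫ u : ℝ, u ^ 2 * Real.exp (-u ^ 2 / (4 * lam) - |u|))
    (F : ℝ → ℝ)
    (hF : ∀ t : ℝ, F t
      = (1/2) * (W 0 + Real.exp (2 * t) * W (2 * t)) - Real.exp t * W t) :
    DifferentiableAt ℝ F 0 ∧ DifferentiableAt ℝ (deriv F) 0 ∧
      deriv (deriv F) 0 = W 0 + deriv (deriv W) 0 ∧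
      deriv (deriv F) 0 = c + (1 - 1 / (2 * lam)) * W 0 ∧
      (1/2 ≤ lam → 0 < deriv (deriv F) 0) := by
  set W' : ℝ → ℝ := fun t => ∫ u, gaussKernelDeriv lam (t - u) * exp (-|u|)
  set W'' : ℝ → ℝ := fun t => ∫ u, gaussKernelDeriv2 lam (t - u) * exp (-|u|)
  have hW' : ∀ t, HasDerivAt W (W' t) t := by
    rw [show W = _ from funext hW]
    exact hasDerivAt_integral_exp_sub_abs hlam
  have hW'' : ∀ t, HasDerivAt W' (W'' t) t := hasDerivAt_integral_gaussKernelDeriv_mul hlam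
  have hW'0 : W' 0 = 0 := integral_gaussKernelDeriv_mul_exp_neg_abs lam
  have hF_midpoint :
      ∀ t, F t = 1 / 2 * (exp 0 * W 0 + exp (2 * t) * W (2 * t)) - exp t * W t := by
    simpa using hF
  have hf := hasDerivAt_exp_mul hW'
  have hF'' := hasDerivAt_deriv_of_eq_midpoint_sub hf
    (hasDerivAt_exp_mul fun t => (hW' t).add (hW'' t)) hF_midpoint 0
  have hF''0 : deriv (deriv F) 0 = W 0 + W'' 0 := by
    rw [hF''.deriv]
    simp only [mul_zero, exp_zero, hW'0]
    ring
  have hc' : c = W'' 0 + W 0 / (2 * lam) := by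
    rw [hc, one_div_mul_integral_sq_mul_exp_sub_abs hlam, hW]
  have hc_pos : 0 < c := hc ▸ mul_pos (by positivity) (integral_sq_mul_exp_sub_abs_pos hlam)
  have hW0 : 0 ≤ W 0 := hW 0 ▸ integral_nonneg fun u => (exp_pos _).le
  refine ⟨(hasDerivAt_of_eq_midpoint_sub hf hF_midpoint 0).differentiableAt,
    hF''.differentiableAt, ?_, ?_, fun hhalf => ?_⟩
  · rw [hF''0, show deriv W = W' from funext fun t => (hW' t).deriv, (hW'' 0).deriv]
  · rw [hF''0, hc']
    ring
  · have hcoef : 0 ≤ 1 - 1 / (2 * lam) := by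
      rw [sub_nonneg, div_le_one (by positivity)]
      linarith
    rw [hF''0, show W 0 + W'' 0 = c + (1 - 1 / (2 * lam)) * W 0 by rw [hc']; ring]
    exact add_pos_of_pos_of_nonneg hc_pos (mul_nonneg hcoef hW0)
end

section
/- For every $\lambda\geq \tfrac12$ there exists $t>0$ such that $\tfrac12\big(W_\lambda(0)+e^{2t}W_\lambda(2t)\big) > e^{t}W_\lambda(t)$, where $W_\lambda(t)=\int_{\mathbb{R}} e^{-(t-u)^2/(4\lambda)-|u|}\,du$. -/
/-!
Put `F s := e^s W_λ(s)` and `w(v) := e^{-v²/(4λ)}`. Substituting `u = v + s` gives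
`F s = ∫ w(v) e^{s - |v + s|} dv`, so `F 0 + F (2t) - 2 F t = ∫ w φ_t`, where `φ_t` is the
second difference in `s` of `e^{s - |v + s|}`. The kernel `φ_t` vanishes on `v ≥ 0`, equals
`(e^{2t} - 1)² e^v ≥ 0` on `v ≤ -2t`, and changes sign on `[-2t, 0]`; without the weight its
integral is `2 (e^t - 1)² > 0`. For `λ ≥ 1/2` we have `e^{-v²/2} ≤ w ≤ 1`, so the negative
part is bounded using `w ≤ 1` and the positive part using chords of the concave function
`-v²/2`. At `t = 1/5` this gives an explicit lower bound, positive by elementary estimates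
on `exp`.
-/

open MeasureTheory Real

namespace StochasticQuantization

lemma integral_exp_mul_add {c : ℝ} (hc : c ≠ 0) (d a b : ℝ) :
    ∫ x in a..b, exp (c * x + d) = (exp (c * b + d) - exp (c * a + d)) / c := by
  rw [intervalIntegral.integral_comp_mul_add (fun x => exp x) hc, integral_exp, smul_eq_mul,
    inv_mul_eq_div]

lemma integral_exp_neg (a b : ℝ) : ∫ x in a..b, exp (-x) = exp (-a) - exp (-b) := by
  rw [intervalIntegral.integral_comp_neg (fun x => exp x), integral_exp]

lemma exp_mul_integral_eq_integral_shift (lam s : ℝ) :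
    exp s * ∫ u, exp (-(s - u) ^ 2 / (4 * lam) - |u|)
      = ∫ v, exp (-v ^ 2 / (4 * lam)) * exp (s - |v + s|) := by
  rw [← integral_const_mul, ← integral_add_right_eq_self _ s]
  congr 1 with v
  rw [← exp_add, ← exp_add]
  ring_nf

lemma integrable_gaussian_mul_exp {lam : ℝ} (hlam : 0 < lam) (s : ℝ) :
    Integrable fun v => exp (-v ^ 2 / (4 * lam)) * exp (s - |v + s|) := by
  have hgauss : Integrable fun v : ℝ => exp (-(4 * lam)⁻¹ * v ^ 2) :=
    integrable_exp_neg_mul_sq (by positivity)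
  refine (hgauss.congr (ae_of_all _ fun v => ?_)).mul_bdd (c := exp s) (by fun_prop)
    (ae_of_all _ fun v => ?_)
  · ring_nf
  · rw [norm_of_nonneg (exp_pos _).le, exp_le_exp]
    linarith [abs_nonneg (v + s)]

lemma gaussian_le_one (lam v : ℝ) (hlam : 0 ≤ lam) : exp (-v ^ 2 / (4 * lam)) ≤ 1 := by
  rw [exp_le_one_iff, neg_div]
  exact neg_nonpos.2 (by positivity)

lemma exp_neg_sq_div_two_le_gaussian {lam : ℝ} (hlam : 1 / 2 ≤ lam) (v : ℝ) :
    exp (-v ^ 2 / 2) ≤ exp (-v ^ 2 / (4 * lam)) := by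
  rw [exp_le_exp, neg_div, neg_div, neg_le_neg_iff]
  exact div_le_div_of_nonneg_left (sq_nonneg v) two_pos (by linarith)

noncomputable def secondDiffKernel (t v : ℝ) : ℝ :=
  exp (-|v|) + exp (2 * t - |v + 2 * t|) - 2 * exp (t - |v + t|)

lemma integrable_gaussian_mul_exp_neg_abs {lam : ℝ} (hlam : 0 < lam) :
    Integrable fun v => exp (-v ^ 2 / (4 * lam)) * exp (-|v|) := by
  simpa using integrable_gaussian_mul_exp hlam 0

lemma continuous_gaussian_mul_secondDiffKernel (lam t : ℝ) :
    Continuous fun v => exp (-v ^ 2 / (4 * lam)) * secondDiffKernel t v := by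
  unfold secondDiffKernel
  fun_prop

lemma integrable_gaussian_mul_secondDiffKernel {lam : ℝ} (hlam : 0 < lam) (t : ℝ) :
    Integrable fun v => exp (-v ^ 2 / (4 * lam)) * secondDiffKernel t v := by
  refine (((integrable_gaussian_mul_exp_neg_abs hlam).add
    (integrable_gaussian_mul_exp hlam (2 * t))).sub
      ((integrable_gaussian_mul_exp hlam t).const_mul 2)).congr (ae_of_all _ fun v => ?_)
  simp only [secondDiffKernel, Pi.add_apply, Pi.sub_apply]
  ring

lemma integral_gaussian_mul_secondDiffKernel {lam : ℝ} (hlam : 0 < lam) (W : ℝ → ℝ)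
    (hW : ∀ t : ℝ, W t = ∫ u : ℝ, exp (-(t - u) ^ 2 / (4 * lam) - |u|)) (t : ℝ) :
    ∫ v, exp (-v ^ 2 / (4 * lam)) * secondDiffKernel t v
      = W 0 + exp (2 * t) * W (2 * t) - 2 * (exp t * W t) := by
  have hi := integrable_gaussian_mul_exp hlam
  have hi₀ := integrable_gaussian_mul_exp_neg_abs hlam
  have h₀ := exp_mul_integral_eq_integral_shift lam 0
  rw [exp_zero, one_mul, ← hW] at h₀
  simp only [add_zero, zero_sub] at h₀
  have hK : (fun v => exp (-v ^ 2 / (4 * lam)) * secondDiffKernel t v) = fun v =>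
      exp (-v ^ 2 / (4 * lam)) * exp (-|v|)
        + exp (-v ^ 2 / (4 * lam)) * exp (2 * t - |v + 2 * t|)
        - 2 * (exp (-v ^ 2 / (4 * lam)) * exp (t - |v + t|)) := by
    ext v
    simp only [secondDiffKernel]
    ring
  rw [hK, integral_sub ?_ ((hi t).const_mul 2), integral_add hi₀ (hi _),
    integral_const_mul, h₀, hW, hW, exp_mul_integral_eq_integral_shift,
    exp_mul_integral_eq_integral_shift]
  exact hi₀.add (hi _)

variable {t v : ℝ}

lemma secondDiffKernel_of_nonneg (ht : 0 ≤ t) (hv : 0 ≤ v) : secondDiffKernel t v = 0 := by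
  rw [secondDiffKernel, abs_of_nonneg hv, abs_of_nonneg (by linarith),
    abs_of_nonneg (by linarith)]
  ring_nf

lemma secondDiffKernel_of_le_neg_two_mul (ht : 0 ≤ t) (hv : v ≤ -2 * t) :
    secondDiffKernel t v = (exp (2 * t) - 1) ^ 2 * exp v := by
  rw [secondDiffKernel, abs_of_nonpos (by linarith), abs_of_nonpos (by linarith),
    abs_of_nonpos (by linarith), neg_neg, show 2 * t - -(v + 2 * t) = 2 * t + 2 * t + v by ring,
    show t - -(v + t) = 2 * t + v by ring, exp_add, exp_add, exp_add]
  ring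

lemma secondDiffKernel_of_mem_Icc_neg_two_mul_neg (h₁ : -2 * t ≤ v) (h₂ : v ≤ -t) :
    secondDiffKernel t v = exp (-v) + (1 - 2 * exp (2 * t)) * exp v := by
  rw [secondDiffKernel, abs_of_nonpos (by linarith), abs_of_nonneg (by linarith),
    abs_of_nonpos (by linarith), neg_neg, show 2 * t - (v + 2 * t) = -v by ring,
    show t - -(v + t) = 2 * t + v by ring, exp_add]
  ring

lemma secondDiffKernel_of_mem_Icc_neg (h₁ : -t ≤ v) (h₂ : v ≤ 0) :
    secondDiffKernel t v = exp v - exp (-v) := by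
  rw [secondDiffKernel, abs_of_nonpos h₂, abs_of_nonneg (by linarith),
    abs_of_nonneg (by linarith), neg_neg, show 2 * t - (v + 2 * t) = -v by ring,
    show t - (v + t) = -v by ring]
  ring

lemma secondDiffKernel_nonneg (ht : 0 ≤ t) (hv : v ≤ -2 * t ∨ 0 ≤ v) :
    0 ≤ secondDiffKernel t v := by
  rcases hv with hv | hv
  · rw [secondDiffKernel_of_le_neg_two_mul ht hv]
    positivity
  · rw [secondDiffKernel_of_nonneg ht hv]

variable {lam : ℝ}

lemma chord_le_integral_gaussian_mul_secondDiffKernel (hlam : 1 / 2 ≤ lam) (ht : 0 ≤ t)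
    {a b : ℝ} (hab : a ≤ b) (hb : b ≤ -2 * t) :
    (exp (2 * t) - 1) ^ 2 * ((exp ((1 - (a + b) / 2) * b + a * b / 2)
        - exp ((1 - (a + b) / 2) * a + a * b / 2)) / (1 - (a + b) / 2))
      ≤ ∫ v in a..b, exp (-v ^ 2 / (4 * lam)) * secondDiffKernel t v := by
  have hk : 1 - (a + b) / 2 ≠ 0 := by linarith
  rw [← integral_exp_mul_add hk, ← intervalIntegral.integral_const_mul]
  refine intervalIntegral.integral_mono_on hab (Continuous.intervalIntegrable (by fun_prop) _ _)
    ((continuous_gaussian_mul_secondDiffKernel lam t).intervalIntegrable a b) fun v hv => ?_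
  rw [secondDiffKernel_of_le_neg_two_mul ht (hv.2.trans hb)]
  -- the chord of the concave function `-v ^ 2 / 2` over `[a, b]` lies below it
  have hchord : (1 - (a + b) / 2) * v + a * b / 2 ≤ -v ^ 2 / 2 + v := by
    nlinarith [mul_nonneg (sub_nonneg.2 hv.1) (sub_nonneg.2 hv.2)]
  calc (exp (2 * t) - 1) ^ 2 * exp ((1 - (a + b) / 2) * v + a * b / 2)
      ≤ (exp (2 * t) - 1) ^ 2 * (exp (-v ^ 2 / 2) * exp v) := by
        gcongr
        rw [← exp_add]
        exact exp_le_exp.2 hchord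
    _ ≤ (exp (2 * t) - 1) ^ 2 * (exp (-v ^ 2 / (4 * lam)) * exp v) := by
        gcongr _ * (?_ * _)
        exact exp_neg_sq_div_two_le_gaussian hlam v
    _ = _ := by ring

lemma le_integral_gaussian_mul_secondDiffKernel_Icc_neg_two_mul_neg (hlam : 1 / 2 ≤ lam)
    (ht : 0 ≤ t) :
    exp (-2 * t ^ 2) * (exp (2 * t) - exp t)
        + (1 - (1 + exp (-2 * t ^ 2)) * exp (2 * t)) * (exp (-t) - exp (-2 * t))
      ≤ ∫ v in (-2 * t)..(-t), exp (-v ^ 2 / (4 * lam)) * secondDiffKernel t v := by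
  set c := exp (-2 * t ^ 2)
  have hint : ∫ v in (-2 * t)..(-t), (c * exp (-v) + (1 - (1 + c) * exp (2 * t)) * exp v)
      = c * (exp (2 * t) - exp t) + (1 - (1 + c) * exp (2 * t)) * (exp (-t) - exp (-2 * t)) := by
    rw [intervalIntegral.integral_add (Continuous.intervalIntegrable (by fun_prop) _ _)
      (Continuous.intervalIntegrable (by fun_prop) _ _),
      intervalIntegral.integral_const_mul, intervalIntegral.integral_const_mul, integral_exp_neg,
      integral_exp, neg_neg, neg_mul, neg_neg]
  rw [← hint]
  refine intervalIntegral.integral_mono_on (by linarith)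
    (Continuous.intervalIntegrable (by fun_prop) _ _)
    ((continuous_gaussian_mul_secondDiffKernel lam t).intervalIntegrable _ _) fun v hv => ?_
  rw [secondDiffKernel_of_mem_Icc_neg_two_mul_neg hv.1 hv.2]
  set w := exp (-v ^ 2 / (4 * lam))
  have hcw : c ≤ w := (exp_le_exp.2 (by nlinarith [hv.1, hv.2])).trans
    (exp_neg_sq_div_two_le_gaussian hlam v)
  have hw : w ≤ 1 := gaussian_le_one lam v (by linarith)
  have hA : 0 ≤ exp (-v) - exp (2 * t) * exp v := by
    rw [← exp_add, sub_nonneg, exp_le_exp]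
    linarith [hv.2]
  have hB : 0 ≤ (exp (2 * t) - 1) * exp v := by
    have := one_le_exp (by linarith : 0 ≤ 2 * t)
    positivity
  nlinarith [mul_nonneg (sub_nonneg.2 hcw) hA, mul_nonneg (sub_nonneg.2 hw) hB]

lemma le_integral_gaussian_mul_secondDiffKernel_Icc_neg (hlam : 0 ≤ lam) (ht : 0 ≤ t) :
    2 - exp t - exp (-t) ≤ ∫ v in (-t)..0, exp (-v ^ 2 / (4 * lam)) * secondDiffKernel t v := by
  have hint : ∫ v in (-t)..0, (exp v - exp (-v)) = 2 - exp t - exp (-t) := by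
    rw [intervalIntegral.integral_sub (Continuous.intervalIntegrable (by fun_prop) _ _)
      (Continuous.intervalIntegrable (by fun_prop) _ _), integral_exp,
      integral_exp_neg, neg_neg, neg_zero, exp_zero]
    ring
  rw [← hint]
  refine intervalIntegral.integral_mono_on (by linarith)
    (Continuous.intervalIntegrable (by fun_prop) _ _)
    ((continuous_gaussian_mul_secondDiffKernel lam t).intervalIntegrable _ _) fun v hv => ?_
  rw [secondDiffKernel_of_mem_Icc_neg hv.1 hv.2]
  have hw := gaussian_le_one lam v hlam
  have hφ : exp v - exp (-v) ≤ 0 := by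
    rw [sub_nonpos, exp_le_exp]
    linarith [hv.2]
  nlinarith [mul_nonneg (sub_nonneg.2 hw) (neg_nonneg.2 hφ)]

lemma exp_neg_le_inv_taylor {y : ℝ} (hy : 0 ≤ y) :
    exp (-y) ≤ (1 + y + y ^ 2 / 2 + y ^ 3 / 6 + y ^ 4 / 24)⁻¹ := by
  rw [exp_neg]
  refine inv_anti₀ (by positivity) ?_
  have := sum_le_exp_of_nonneg hy 5
  norm_num [Finset.sum_range_succ, Nat.factorial] at this
  linarith

lemma lowerBound_one_fifth_pos :
    0 < (exp (2 / 5) - 1) ^ 2 * ((exp (-(3 / 2)) - exp (-4)) / (5 / 2))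
      + (exp (2 / 5) - 1) ^ 2 * ((exp (-(12 / 25)) - exp (-(3 / 2))) / (17 / 10))
      + (exp (-(2 / 25)) * (exp (2 / 5) - exp (1 / 5))
        + (1 - (1 + exp (-(2 / 25))) * exp (2 / 5)) * (exp (-(1 / 5)) - exp (-(2 / 5))))
      + (2 - exp (1 / 5) - exp (-(1 / 5))) := by
  set x := exp (1 / 5)
  set c := exp (-(2 / 25))
  set G := (exp (-(3 / 2)) - exp (-4)) / (5 / 2)
    + (exp (-(12 / 25)) - exp (-(3 / 2))) / (17 / 10)
  have hx2 : exp (2 / 5) = x ^ 2 := by rw [sq, ← exp_add]; norm_num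
  have hx0 : 0 < x := exp_pos _
  have hxi : exp (-(1 / 5)) = x⁻¹ := exp_neg _
  have hx2i : exp (-(2 / 5)) = (x ^ 2)⁻¹ := by rw [exp_neg, hx2]
  -- the lower bound vanishes to second order at `t = 0`
  have hfactor : (exp (2 / 5) - 1) ^ 2 * ((exp (-(3 / 2)) - exp (-4)) / (5 / 2))
      + (exp (2 / 5) - 1) ^ 2 * ((exp (-(12 / 25)) - exp (-(3 / 2))) / (17 / 10))
      + (c * (exp (2 / 5) - x) + (1 - (1 + c) * exp (2 / 5)) * (exp (-(1 / 5)) - exp (-(2 / 5))))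
      + (2 - x - exp (-(1 / 5)))
      = (x - 1) ^ 2 * ((x + 1) ^ 2 * G + c - (1 + 2 * x) / x ^ 2) := by
    rw [hxi, hx2i, hx2]
    simp only [G]
    field_simp
    ring
  rw [hfactor]
  have hx : 1.22 ≤ x := by
    have := quadratic_le_exp_of_nonneg (x := 1 / 5) (by norm_num)
    norm_num at this ⊢
    linarith
  have hc : 0.92 ≤ c := by linarith [add_one_le_exp (-(2 / 25))]
  have hp : (22 / 25) ^ 4 ≤ exp (-(12 / 25)) := by
    have := one_sub_div_pow_le_exp_neg (n := 4) (t := 12 / 25) (by norm_num)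
    norm_num at this ⊢
    exact this
  have hq : exp (-(3 / 2)) ≤ 0.2274 := (exp_neg_le_inv_taylor (by norm_num)).trans (by norm_num)
  have hr : exp (-4) ≤ 0.0292 := (exp_neg_le_inv_taylor (by norm_num)).trans (by norm_num)
  have hG : 0.298 ≤ G := by
    simp only [G]
    norm_num at hp ⊢
    linarith
  have hsq : 4.9284 ≤ (x + 1) ^ 2 := by nlinarith
  have hfrac : (1 + 2 * x) / x ^ 2 ≤ 2.3113 := by
    rw [div_le_iff₀ (by positivity)]
    nlinarith
  have hpos : 0 < (x + 1) ^ 2 * G + c - (1 + 2 * x) / x ^ 2 := by nlinarith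
  have hx1 : x - 1 ≠ 0 := by linarith
  positivity

lemma integral_gaussian_mul_secondDiffKernel_pos (hlam : 1 / 2 ≤ lam) :
    0 < ∫ v, exp (-v ^ 2 / (4 * lam)) * secondDiffKernel (1 / 5) v := by
  set f := fun v => exp (-v ^ 2 / (4 * lam)) * secondDiffKernel (1 / 5) v
  have hf : ∀ a b : ℝ, IntervalIntegrable f volume a b :=
    (continuous_gaussian_mul_secondDiffKernel lam (1 / 5)).intervalIntegrable
  have hcompl : 0 ≤ ∫ v in (Set.Icc (-2) 0)ᶜ, f v := by
    refine setIntegral_nonneg measurableSet_Icc.compl fun v hv => ?_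
    rw [Set.mem_compl_iff, Set.mem_Icc, not_and_or, not_le, not_le] at hv
    exact mul_nonneg (exp_pos _).le
      (secondDiffKernel_nonneg (by norm_num) (hv.imp (fun h => by linarith) le_of_lt))
  have hsplit : ∫ v in Set.Icc (-2) 0, f v = (∫ v in (-2)..(-1), f v)
      + (∫ v in (-1)..(-(2 / 5)), f v) + (∫ v in (-(2 / 5))..(-(1 / 5)), f v)
      + ∫ v in (-(1 / 5))..0, f v := by
    rw [integral_Icc_eq_integral_Ioc, ← intervalIntegral.integral_of_le (by norm_num),
      intervalIntegral.integral_add_adjacent_intervals (hf _ _) (hf _ _),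
      intervalIntegral.integral_add_adjacent_intervals (hf _ _) (hf _ _),
      intervalIntegral.integral_add_adjacent_intervals (hf _ _) (hf _ _)]
  have h₁ := chord_le_integral_gaussian_mul_secondDiffKernel hlam (t := 1 / 5) (a := -2)
    (b := -1) (by norm_num) (by norm_num) (by norm_num)
  have h₂ := chord_le_integral_gaussian_mul_secondDiffKernel hlam (t := 1 / 5) (a := -1)
    (b := -(2 / 5)) (by norm_num) (by norm_num) (by norm_num)
  have h₃ := le_integral_gaussian_mul_secondDiffKernel_Icc_neg_two_mul_neg hlam
    (t := 1 / 5) (by norm_num)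
  have h₄ := le_integral_gaussian_mul_secondDiffKernel_Icc_neg (lam := lam) (by linarith)
    (t := 1 / 5) (by norm_num)
  norm_num at h₁ h₂ h₃ h₄
  rw [← integral_add_compl measurableSet_Icc
    (integrable_gaussian_mul_secondDiffKernel (by linarith) _), hsplit]
  linarith [lowerBound_one_fifth_pos]

end StochasticQuantization

open StochasticQuantization in
/-- Concrete form of the violation of reflection positivity of the
stochastic-quantization measure of the free field in one space-time dimension
with unit mass, for `λ ≥ 1/2`. -/
theorem stmt_9 (lam : ℝ) (hlam : 1/2 ≤ lam)
    (W : ℝ → ℝ)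
    (hW : ∀ t : ℝ, W t = ∫ u : ℝ, Real.exp (-(t - u) ^ 2 / (4 * lam) - |u|)) :
    ∃ t : ℝ, 0 < t ∧
      Real.exp t * W t < (1/2) * (W 0 + Real.exp (2 * t) * W (2 * t)) := by
  refine ⟨1 / 5, by norm_num, ?_⟩
  have hdiff := integral_gaussian_mul_secondDiffKernel (by linarith) W hW (1 / 5)
  linarith [integral_gaussian_mul_secondDiffKernel_pos hlam]
end

section
/- For every $\lambda>0$ and $m>0$ with $\lambda m^2\geq \tfrac12$, there exists $t>0$ such that $\tfrac12\big(W_{\lambda,m}(0)+e^{2mt}W_{\lambda,m}(2t)\big) > e^{mt}W_{\lambda,m}(t)$, where $W_{\lambda,m}(t)=\int_{\mathbb{R}} e^{-(t-u)^2/(4\lambda)-m|u|}\,du$. -/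
/-!
After the substitution `u ↦ u + s`, `exp (m s) W(s) = ∫ g(u) k_s(u) du` with the Gaussian weight
`g(u) = exp (-u²/(4λ))` and `k_s(u) = exp (m s - m |u + s|)`, so the claim is that
`∫ g (k_0 + k_{2t} - 2 k_t) > 0` for some `t > 0`. The second difference `k_0 + k_{2t} - 2 k_t`
vanishes on `u ≥ 0`, equals `(exp (2mt) - 1)² exp (m u)` on `u ≤ -2t`, and is bounded below on
`[-2t, 0]` by minus a tent of height `2 m t exp (m t)`; since `0 < g ≤ 1`, the interval `[-2t, 0]`
contributes at least `-2 exp (m t) (m t)² / m`, while the positive part is about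
`4 (m t)² ∫_{u ≤ 0} g(u) exp (m u) du`. When `λ m² ≥ 1/2` one has `g(u) ≥ 1 - (m u)²/2`, so this
last integral is at least `∫_{-1/m}^0 exp (m u) (1 - (m u)²/2) du = 3 / (2 e m) > 1 / (2 m)`;
the choice `m t = 1/100` leaves enough room for the error terms.
-/

open MeasureTheory Real Set

lemma exp_sub_one_le_mul_exp (x : ℝ) : exp x - 1 ≤ x * exp x := by
  have h := mul_le_mul_of_nonneg_right (add_one_le_exp (-x)) (exp_pos x).le
  rw [← exp_add, neg_add_cancel, exp_zero, add_mul, neg_mul, one_mul] at h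
  linarith

lemma exp_sub_exp_neg_le (x : ℝ) : exp x - exp (-x) ≤ 2 * x * exp x := by
  have h := mul_le_mul_of_nonneg_right (exp_sub_one_le_mul_exp (2 * x)) (exp_pos (-x)).le
  have hx : exp (2 * x) * exp (-x) = exp x := by rw [← exp_add]; ring_nf
  have hx' : 2 * x * exp (2 * x) * exp (-x) = 2 * x * exp x := by rw [mul_assoc, hx]
  rw [sub_mul, hx, hx', one_mul] at h
  exact h

lemma two_le_exp_add_exp_neg (x : ℝ) : 2 ≤ exp x + exp (-x) := by
  linarith [add_one_le_exp x, add_one_le_exp (-x)]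

noncomputable def gaussWeight (lam u : ℝ) : ℝ := exp (-u ^ 2 / (4 * lam))

noncomputable def expKernel (m s u : ℝ) : ℝ := exp (m * s - m * |u + s|)

noncomputable def expKernelSecondDiff (m t u : ℝ) : ℝ :=
  expKernel m 0 u + expKernel m (2 * t) u - 2 * expKernel m t u

section GaussWeight

variable {lam : ℝ}

lemma gaussWeight_pos (lam u : ℝ) : 0 < gaussWeight lam u := exp_pos _

lemma gaussWeight_le_one (hlam : 0 ≤ lam) (u : ℝ) : gaussWeight lam u ≤ 1 := by
  rw [gaussWeight, exp_le_one_iff, neg_div]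
  exact neg_nonpos.2 (by positivity)

lemma one_sub_sq_le_gaussWeight (hlam : 0 < lam) {m : ℝ} (hcond : 1 / 2 ≤ lam * m ^ 2)
    (u : ℝ) : 1 - (m * u) ^ 2 / 2 ≤ gaussWeight lam u := by
  have h : -((m * u) ^ 2 / 2) ≤ -u ^ 2 / (4 * lam) := by
    rw [neg_div, neg_le_neg_iff, div_le_div_iff₀ (by positivity) two_pos]
    nlinarith [mul_nonneg (sq_nonneg u) (sub_nonneg.2 hcond)]
  rw [gaussWeight]
  linarith [add_one_le_exp (-((m * u) ^ 2 / 2)), exp_le_exp.2 h]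

lemma continuous_gaussWeight (lam : ℝ) : Continuous (gaussWeight lam) := by
  unfold gaussWeight; fun_prop

lemma integrable_gaussWeight (hlam : 0 < lam) : Integrable (gaussWeight lam) := by
  convert integrable_exp_neg_mul_sq (inv_pos.2 (mul_pos four_pos hlam)) using 2 with u
  rw [gaussWeight, neg_div, div_eq_inv_mul, neg_mul]

end GaussWeight

lemma integral_exp_mul_mul_one_sub_sq {m : ℝ} (hm : m ≠ 0) (a b : ℝ) :
    ∫ u in a..b, exp (m * u) * (1 - (m * u) ^ 2 / 2) =
      (exp (m * b) * (m * b - (m * b) ^ 2 / 2) - exp (m * a) * (m * a - (m * a) ^ 2 / 2)) / m := by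
  have hderiv : ∀ u ∈ uIcc a b, HasDerivAt (fun u => exp (m * u) * (m * u - (m * u) ^ 2 / 2) / m)
      (exp (m * u) * (1 - (m * u) ^ 2 / 2)) u := by
    intro u _
    have hlin : HasDerivAt (fun u => m * u) m u := by simpa using (hasDerivAt_id u).const_mul m
    exact ((hlin.exp.mul (hlin.sub (hlin.pow 2 |>.div_const 2))).div_const m).congr_deriv
      (by simp only [Pi.sub_apply, Pi.pow_apply]; field_simp; ring)
  rw [intervalIntegral.integral_eq_sub_of_hasDerivAt hderiv
    ((by fun_prop : Continuous fun u => exp (m * u) * (1 - (m * u) ^ 2 / 2)).intervalIntegrable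
      _ _)]
  ring

lemma integrableOn_Iic_gaussWeight_mul_exp {lam m : ℝ} (hlam : 0 < lam) (hm : 0 ≤ m) (b : ℝ) :
    IntegrableOn (fun u => gaussWeight lam u * exp (m * u)) (Iic b) := by
  refine (integrable_gaussWeight hlam).integrableOn.mul_bdd (by fun_prop) (c := exp (m * b))
    (ae_restrict_of_forall_mem measurableSet_Iic fun u hu => ?_)
  rw [norm_of_nonneg (exp_pos _).le]
  exact exp_le_exp.2 (mul_le_mul_of_nonneg_left hu hm)

lemma le_setIntegral_Iic_gaussWeight_mul_exp {lam m : ℝ} (hlam : 0 < lam) (hm : 0 < m)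
    (hcond : 1 / 2 ≤ lam * m ^ 2) {c : ℝ} (hc : c ≤ 1) :
    (3 / 2 * exp (-1) - exp (-c) * (c + c ^ 2 / 2)) / m ≤
      ∫ u in Iic (-(c / m)), gaussWeight lam u * exp (m * u) := by
  have hI := integrableOn_Iic_gaussWeight_mul_exp hlam hm.le
  have hsplit := intervalIntegral.integral_Iic_sub_Iic (hI (-(1 / m))) (hI (-(c / m)))
  have hnonneg : 0 ≤ ∫ u in Iic (-(1 / m)), gaussWeight lam u * exp (m * u) :=
    setIntegral_nonneg measurableSet_Iic fun u _ =>
      (mul_pos (gaussWeight_pos lam u) (exp_pos _)).le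
  have hmono : ∫ u in -(1 / m)..-(c / m), exp (m * u) * (1 - (m * u) ^ 2 / 2) ≤
      ∫ u in -(1 / m)..-(c / m), gaussWeight lam u * exp (m * u) := by
    refine intervalIntegral.integral_mono_on (neg_le_neg (div_le_div_of_nonneg_right hc hm.le))
      ((by fun_prop : Continuous fun u => exp (m * u) * (1 - (m * u) ^ 2 / 2)).intervalIntegrable
        _ _)
      (((continuous_gaussWeight lam).mul (by fun_prop)).intervalIntegrable _ _) fun u _ => ?_
    rw [mul_comm (gaussWeight lam u)]
    exact mul_le_mul_of_nonneg_left (one_sub_sq_le_gaussWeight hlam hcond u) (exp_pos _).le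
  rw [integral_exp_mul_mul_one_sub_sq hm.ne'] at hmono
  have h1 : m * -(1 / m) = -1 := by field_simp
  have hc' : m * -(c / m) = -c := by field_simp
  rw [h1, hc'] at hmono
  have : (exp (-c) * (-c - (-c) ^ 2 / 2) - exp (-1) * (-1 - (-1) ^ 2 / 2)) / m =
      (3 / 2 * exp (-1) - exp (-c) * (c + c ^ 2 / 2)) / m := by ring
  linarith

section ExpKernel

variable {m s t u : ℝ}

lemma expKernel_of_neg_le (h : -s ≤ u) : expKernel m s u = exp (-(m * u)) := by
  rw [expKernel, abs_of_nonneg (by linarith)]; ring_nf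

lemma expKernel_of_le_neg (h : u ≤ -s) : expKernel m s u = exp (m * u + 2 * (m * s)) := by
  rw [expKernel, abs_of_nonpos (by linarith)]; ring_nf

lemma expKernel_le (hm : 0 ≤ m) (s u : ℝ) : expKernel m s u ≤ exp (m * s) :=
  exp_le_exp.2 (sub_le_self _ (by positivity))

lemma continuous_expKernel (m s : ℝ) : Continuous (expKernel m s) := by
  unfold expKernel; fun_prop

lemma integrable_gaussWeight_mul_expKernel {lam : ℝ} (hlam : 0 < lam) (hm : 0 ≤ m) (s : ℝ) :
    Integrable (fun u => gaussWeight lam u * expKernel m s u) := by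
  refine (integrable_gaussWeight hlam).mul_bdd (continuous_expKernel m s).aestronglyMeasurable
    (c := exp (m * s)) (ae_of_all _ fun u => ?_)
  rw [expKernel, norm_of_nonneg (exp_pos _).le]
  exact expKernel_le hm s u

lemma expKernelSecondDiff_of_nonneg (ht : 0 ≤ t) (hu : 0 ≤ u) :
    expKernelSecondDiff m t u = 0 := by
  rw [expKernelSecondDiff, expKernel_of_neg_le (by linarith), expKernel_of_neg_le (by linarith),
    expKernel_of_neg_le (by linarith)]
  ring

lemma expKernelSecondDiff_of_le (ht : 0 ≤ t) (hu : u ≤ -(2 * t)) :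
    expKernelSecondDiff m t u = (exp (2 * (m * t)) - 1) ^ 2 * exp (m * u) := by
  rw [expKernelSecondDiff, expKernel_of_le_neg (by linarith), expKernel_of_le_neg (by linarith),
    expKernel_of_le_neg (by linarith)]
  simp only [exp_add, mul_zero, add_zero]
  have : exp (2 * (m * (2 * t))) = exp (2 * (m * t)) ^ 2 := by rw [← exp_nat_mul]; ring_nf
  rw [this]; ring

lemma le_expKernelSecondDiff_of_mem_Icc_neg_zero (hm : 0 ≤ m) (hu : u ∈ Icc (-t) 0) :
    2 * m * exp (m * t) * u ≤ expKernelSecondDiff m t u := by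
  rw [expKernelSecondDiff, expKernel_of_le_neg (by linarith [hu.2]),
    expKernel_of_neg_le (by linarith [hu.1, hu.2]), expKernel_of_neg_le hu.1, mul_zero, mul_zero,
    add_zero]
  have h := exp_sub_exp_neg_le (-(m * u))
  have hq : exp (-(m * u)) ≤ exp (m * t) := exp_le_exp.2 (by nlinarith [hu.1])
  rw [neg_neg] at h
  nlinarith [mul_le_mul_of_nonneg_left hq (by nlinarith [hu.2] : 0 ≤ -(2 * m * u))]

lemma le_expKernelSecondDiff_of_mem_Icc_neg_two_mul_neg (hm : 0 ≤ m)
    (hu : u ∈ Icc (-(2 * t)) (-t)) :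
    -(2 * m * exp (m * t)) * (u + 2 * t) ≤ expKernelSecondDiff m t u := by
  rw [expKernelSecondDiff, expKernel_of_le_neg (by linarith [hu.1, hu.2]),
    expKernel_of_neg_le hu.1, expKernel_of_le_neg hu.2, mul_zero, mul_zero, add_zero]
  have hz : 0 ≤ m * (u + 2 * t) := mul_nonneg hm (by linarith [hu.1])
  have hq : exp (m * u + 2 * (m * t)) ≤ exp (m * t) := exp_le_exp.2 (by nlinarith [hu.2])
  have h := exp_sub_one_le_mul_exp (m * u + 2 * (m * t))
  nlinarith [two_le_exp_add_exp_neg (m * u), mul_le_mul_of_nonneg_left hq hz]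

end ExpKernel

lemma exp_mul_integral_eq_integral_gaussWeight_mul_expKernel (lam m s : ℝ) :
    exp (m * s) * ∫ u, exp (-(s - u) ^ 2 / (4 * lam) - m * |u|) =
      ∫ u, gaussWeight lam u * expKernel m s u := by
  rw [← integral_const_mul, ← integral_add_right_eq_self _ s]
  congr 1 with u
  rw [gaussWeight, expKernel, ← exp_add, ← exp_add]
  ring_nf

lemma integral_eq_Iic_add_intervalIntegral_add_intervalIntegral_add_Ioi {f : ℝ → ℝ}
    (hf : Integrable f) (a b c : ℝ) :
    ∫ u, f u =
      (∫ u in Iic a, f u) + (∫ u in a..b, f u) + (∫ u in b..c, f u) + ∫ u in Ioi c, f u := by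
  have h1 := intervalIntegral.integral_Iic_add_Ioi (b := c) hf.integrableOn hf.integrableOn
  have h2 := intervalIntegral.integral_Iic_sub_Iic (a := a) (b := c) hf.integrableOn hf.integrableOn
  have h3 := intervalIntegral.integral_add_adjacent_intervals (a := a) (b := b) (c := c)
    hf.intervalIntegrable hf.intervalIntegrable
  linarith

lemma intervalIntegral_le_intervalIntegral_gaussWeight_mul {lam a b : ℝ} (hlam : 0 ≤ lam)
    (hab : a ≤ b) {f l : ℝ → ℝ} (hf : Continuous f) (hl : Continuous l)
    (hlf : ∀ u ∈ Icc a b, l u ≤ f u) (hl0 : ∀ u ∈ Icc a b, l u ≤ 0) :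
    ∫ u in a..b, l u ≤ ∫ u in a..b, gaussWeight lam u * f u := by
  refine intervalIntegral.integral_mono_on hab (hl.intervalIntegrable _ _)
    (((continuous_gaussWeight lam).mul hf).intervalIntegrable _ _) fun u hu => ?_
  have hg0 := (gaussWeight_pos lam u).le
  have hg1 := gaussWeight_le_one hlam u
  nlinarith [mul_le_mul_of_nonneg_left (hlf u hu) hg0, hl0 u hu]

section SecondDiff

variable {lam m t : ℝ}

lemma continuous_expKernelSecondDiff (m t : ℝ) : Continuous (expKernelSecondDiff m t) := by
  unfold expKernelSecondDiff
  have := continuous_expKernel m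
  fun_prop

lemma integrable_gaussWeight_mul_expKernelSecondDiff (hlam : 0 < lam) (hm : 0 ≤ m) (t : ℝ) :
    Integrable (fun u => gaussWeight lam u * expKernelSecondDiff m t u) := by
  have h := ((integrable_gaussWeight_mul_expKernel hlam hm 0).add
    (integrable_gaussWeight_mul_expKernel hlam hm (2 * t))).sub
    ((integrable_gaussWeight_mul_expKernel hlam hm t).const_mul 2)
  convert h using 2 with u
  simp only [expKernelSecondDiff, Pi.add_apply, Pi.sub_apply]
  ring

lemma integral_gaussWeight_mul_expKernelSecondDiff (hlam : 0 < lam) (hm : 0 ≤ m) (t : ℝ) :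
    ∫ u, gaussWeight lam u * expKernelSecondDiff m t u =
      (∫ u, gaussWeight lam u * expKernel m 0 u) + (∫ u, gaussWeight lam u * expKernel m (2 * t) u)
        - 2 * ∫ u, gaussWeight lam u * expKernel m t u := by
  have h0 := integrable_gaussWeight_mul_expKernel hlam hm 0
  have h1 := integrable_gaussWeight_mul_expKernel hlam hm t
  have h2 := integrable_gaussWeight_mul_expKernel hlam hm (2 * t)
  calc ∫ u, gaussWeight lam u * expKernelSecondDiff m t u
      = ∫ u, (gaussWeight lam u * expKernel m 0 u + gaussWeight lam u * expKernel m (2 * t) u)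
          - 2 * (gaussWeight lam u * expKernel m t u) := by
        congr 1 with u
        rw [expKernelSecondDiff]
        ring
    _ = _ := by
        rw [integral_sub, integral_add h0 h2, integral_const_mul]
        exacts [h0.add h2, h1.const_mul 2]

lemma setIntegral_Ioi_gaussWeight_mul_expKernelSecondDiff (ht : 0 ≤ t) :
    ∫ u in Ioi 0, gaussWeight lam u * expKernelSecondDiff m t u = 0 := by
  rw [setIntegral_congr_fun measurableSet_Ioi fun u hu => by
    rw [expKernelSecondDiff_of_nonneg ht hu.le, mul_zero]]
  simp

lemma setIntegral_Iic_gaussWeight_mul_expKernelSecondDiff (ht : 0 ≤ t) :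
    ∫ u in Iic (-(2 * t)), gaussWeight lam u * expKernelSecondDiff m t u =
      (exp (2 * (m * t)) - 1) ^ 2 * ∫ u in Iic (-(2 * t)), gaussWeight lam u * exp (m * u) := by
  rw [← integral_const_mul]
  refine setIntegral_congr_fun measurableSet_Iic fun u hu => ?_
  rw [expKernelSecondDiff_of_le ht hu]
  ring

lemma neg_le_intervalIntegral_gaussWeight_mul_expKernelSecondDiff_neg_zero (hlam : 0 ≤ lam)
    (hm : 0 ≤ m) (ht : 0 ≤ t) :
    -(m * exp (m * t) * t ^ 2) ≤ ∫ u in -t..0, gaussWeight lam u * expKernelSecondDiff m t u := by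
  have h := intervalIntegral_le_intervalIntegral_gaussWeight_mul hlam (neg_nonpos.2 ht)
    (continuous_expKernelSecondDiff m t)
    (by fun_prop : Continuous fun u => 2 * m * exp (m * t) * u)
    (fun u hu => le_expKernelSecondDiff_of_mem_Icc_neg_zero hm hu)
    (fun u hu => mul_nonpos_of_nonneg_of_nonpos (by positivity) hu.2)
  rw [intervalIntegral.integral_const_mul, integral_id] at h
  linarith

lemma neg_le_intervalIntegral_gaussWeight_mul_expKernelSecondDiff_neg_two_mul_neg
    (hlam : 0 ≤ lam) (hm : 0 ≤ m) (ht : 0 ≤ t) :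
    -(m * exp (m * t) * t ^ 2) ≤
      ∫ u in -(2 * t)..(-t), gaussWeight lam u * expKernelSecondDiff m t u := by
  have h := intervalIntegral_le_intervalIntegral_gaussWeight_mul hlam (by linarith)
    (continuous_expKernelSecondDiff m t)
    (by fun_prop : Continuous fun u => -(2 * m * exp (m * t)) * (u + 2 * t))
    (fun u hu => le_expKernelSecondDiff_of_mem_Icc_neg_two_mul_neg hm hu)
    (fun u hu => mul_nonpos_of_nonpos_of_nonneg (neg_nonpos.2 (by positivity)) (by linarith [hu.1]))
  rw [intervalIntegral.integral_const_mul, intervalIntegral.integral_comp_add_right (fun u => u),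
    integral_id] at h
  linarith

end SecondDiff

lemma exists_integral_gaussWeight_mul_expKernelSecondDiff_pos {lam m : ℝ} (hlam : 0 < lam)
    (hm : 0 < m) (hcond : 1 / 2 ≤ lam * m ^ 2) :
    ∃ t > 0, 0 < ∫ u, gaussWeight lam u * expKernelSecondDiff m t u := by
  set t := 1 / 100 / m with ht_def
  have ht : 0 < t := by positivity
  have hmt : m * t = 1 / 100 := by rw [ht_def]; field_simp
  refine ⟨t, ht, ?_⟩
  rw [integral_eq_Iic_add_intervalIntegral_add_intervalIntegral_add_Ioi
    (integrable_gaussWeight_mul_expKernelSecondDiff hlam hm.le t) (-(2 * t)) (-t) 0,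
    setIntegral_Iic_gaussWeight_mul_expKernelSecondDiff ht.le,
    setIntegral_Ioi_gaussWeight_mul_expKernelSecondDiff ht.le, hmt]
  have h_tail := le_setIntegral_Iic_gaussWeight_mul_exp hlam hm hcond (c := 2 * (1 / 100))
    (by norm_num)
  rw [mul_div_assoc, ← ht_def] at h_tail
  have h_near :=
    neg_le_intervalIntegral_gaussWeight_mul_expKernelSecondDiff_neg_zero hlam.le hm.le ht.le
  have h_far :=
    neg_le_intervalIntegral_gaussWeight_mul_expKernelSecondDiff_neg_two_mul_neg hlam.le hm.le ht.le
  have h_mid : m * exp (m * t) * t ^ 2 ≤ 1 / 9900 * (1 / m) := by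
    have hq := exp_bound_div_one_sub_of_interval' (x := 1 / 100) (by norm_num) (by norm_num)
    rw [hmt, ht_def,
      show m * exp (1 / 100) * (1 / 100 / m) ^ 2 = exp (1 / 100) / 10000 * (1 / m) by
        field_simp; norm_num]
    refine mul_le_mul_of_nonneg_right ?_ (by positivity)
    norm_num at hq
    linarith
  have hsq : (2 * (1 / 100)) ^ 2 ≤ (exp (2 * (1 / 100)) - 1) ^ 2 :=
    pow_le_pow_left₀ (by norm_num) (by linarith [add_one_le_exp (2 * (1 / 100) : ℝ)]) 2
  have he : 367 / 1000 < exp (-1) := by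
    rw [exp_neg, lt_inv_comm₀ (by norm_num) (exp_pos 1)]
    exact exp_one_lt_d9.trans (by norm_num)
  have h_tail' : 53 / 100 / m ≤ ∫ u in Iic (-(2 * t)), gaussWeight lam u * exp (m * u) := by
    refine le_trans ?_ h_tail
    gcongr
    have hexp : exp (-(2 * (1 / 100))) ≤ 1 := exp_le_one_iff.2 (by norm_num)
    nlinarith
  have h_left := mul_le_mul hsq h_tail' (by positivity) (sq_nonneg _)
  have : (2 * (1 / 100) : ℝ) ^ 2 * (53 / 100 / m) = 53 / 250000 * (1 / m) := by ring
  have : 0 < 1 / m := by positivity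
  linarith

/-- Concrete form of the violation of reflection positivity of the
stochastic-quantization measure of the free field of mass `m` in one
space-time dimension, for `1/2 ≤ λ m² < ∞`. -/
theorem stmt_10 (lam m : ℝ) (hlam : 0 < lam) (hm : 0 < m)
    (hcond : 1/2 ≤ lam * m ^ 2)
    (W : ℝ → ℝ)
    (hW : ∀ t : ℝ, W t = ∫ u : ℝ, Real.exp (-(t - u) ^ 2 / (4 * lam) - m * |u|)) :
    ∃ t : ℝ, 0 < t ∧
      Real.exp (m * t) * W t
        < (1/2) * (W 0 + Real.exp (2 * m * t) * W (2 * t)) := by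
  obtain ⟨t, ht, hpos⟩ := exists_integral_gaussWeight_mul_expKernelSecondDiff_pos hlam hm hcond
  have hF (s : ℝ) : exp (m * s) * W s = ∫ u, gaussWeight lam u * expKernel m s u := by
    rw [hW, exp_mul_integral_eq_integral_gaussWeight_mul_expKernel]
  have hF0 := hF 0
  rw [mul_zero, exp_zero, one_mul] at hF0
  rw [integral_gaussWeight_mul_expKernelSecondDiff hlam hm.le, ← hF0, ← hF, ← hF] at hpos
  refine ⟨t, ht, ?_⟩
  rw [show 2 * m * t = m * (2 * t) by ring]
  linarith
end

section
/- Let $d\geq 2$, $\lambda>0$, $m>0$, let $\mu(p)=\sqrt{\|p\|^2+m^2}$ for $p\in\mathbb{R}^{d-1}$, and let $\rho:\mathbb{R}^{d-1}\to[0,\infty)$ be continuous with compact support. Define $G(T) = \int_{\mathbb{R}^{d-1}}\int_{\mathbb{R}} e^{-(T-u)^2/(4\lambda)}\, e^{T\mu(p)}\, e^{-2|u|\mu(p)}\, \rho(p)\, du\, dp$ and $H(T) = G(0)+G(2T)-2G(T)$. Then $H$ is twice differentiable at $0$, $H(0)=0$, $H'(0)=0$, and $H''(0) = \int_{\mathbb{R}^{d-1}}\int_{\mathbb{R}}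 e^{-u^2/(4\lambda)}\, e^{-2|u|\mu(p)}\, \Big(2\mu(p)^2 - \frac{1}{\lambda} + \frac{u^2}{2\lambda^2}\Big)\, \rho(p)\, du\, dp$. -/
/-!
Completing the square, `-(T - u)² / (4λ) + Tμ = -T² / (4λ) - u² / (4λ) + T (μ + u / (2λ))`, so
`G(T) = exp (-T² / (4λ)) · M(T)`, where `M` is the moment generating function of
`X(p, u) = μ(p) + u / (2λ)` under the finite measure with density
`exp (-u² / (4λ)) exp (-2|u| μ(p)) ρ(p)`. The Gaussian decay of this density in `u` makes `M`
finite everywhere, hence analytic, with `M''(0) = ∫ X²`. The chain rule gives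
`H''(0) = 2 G''(0) = 2 ∫ X² - (1/λ) ∫ 1`, and since the measure is invariant under `u ↦ -u`,
`2 ∫ X² = ∫ (X(p, u)² + X(p, -u)²) = ∫ (2μ² + u² / (2λ²))`.
-/

open MeasureTheory Real ProbabilityTheory

noncomputable section

variable {α : Type*}

def spectralWeight (lam : ℝ) (μ ρ : α → ℝ) (x : α × ℝ) : ℝ :=
  exp (-x.2 ^ 2 / (4 * lam)) * exp (-2 * |x.2| * μ x.1) * ρ x.1

def shiftedEnergy (lam : ℝ) (μ : α → ℝ) (x : α × ℝ) : ℝ := μ x.1 + x.2 / (2 * lam)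

def spectralMeasure [MeasurableSpace α] (ν : Measure α) (lam : ℝ) (μ ρ : α → ℝ) :
    Measure (α × ℝ) :=
  (ν.prod volume).withDensity fun x => ENNReal.ofReal (spectralWeight lam μ ρ x)

def reflectionDefect (G : ℝ → ℝ) (T : ℝ) : ℝ := G 0 + G (2 * T) - 2 * G T

end

section Calculus

variable {G M : ℝ → ℝ} {a : ℝ}

lemma hasDerivAt_comp_two_mul {f : ℝ → ℝ} {f' t : ℝ} (hf : HasDerivAt f f' (2 * t)) :
    HasDerivAt (fun T => f (2 * T)) (2 * f') t :=
  (hf.comp t ((hasDerivAt_id t).const_mul 2)).congr_deriv (by ring)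

lemma reflectionDefect_zero (G : ℝ → ℝ) : reflectionDefect G 0 = 0 := by
  rw [reflectionDefect, mul_zero]
  ring

lemma hasDerivAt_reflectionDefect (hG : Differentiable ℝ G) (t : ℝ) :
    HasDerivAt (reflectionDefect G) (2 * deriv G (2 * t) - 2 * deriv G t) t :=
  (((hasDerivAt_const t (G 0)).add (hasDerivAt_comp_two_mul (hG (2 * t)).hasDerivAt)).sub
    ((hG t).hasDerivAt.const_mul 2)).congr_deriv (by ring)

lemma deriv_reflectionDefect (hG : Differentiable ℝ G) :
    deriv (reflectionDefect G) = fun t => 2 * deriv G (2 * t) - 2 * deriv G t :=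
  funext fun t => (hasDerivAt_reflectionDefect hG t).deriv

lemma hasDerivAt_deriv_reflectionDefect_zero (hG : Differentiable ℝ G) {g₂ : ℝ}
    (hG₂ : HasDerivAt (deriv G) g₂ 0) :
    HasDerivAt (deriv (reflectionDefect G)) (2 * g₂) 0 := by
  rw [deriv_reflectionDefect hG]
  have h2 : HasDerivAt (deriv G) g₂ (2 * 0) := by rwa [mul_zero]
  exact ((hasDerivAt_comp_two_mul h2).const_mul 2 |>.sub (hG₂.const_mul 2)).congr_deriv
    (by ring)

lemma hasDerivAt_exp_neg_mul_sq (t : ℝ) :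
    HasDerivAt (fun t => exp (-a * t ^ 2)) (-2 * a * t * exp (-a * t ^ 2)) t :=
  ((hasDerivAt_pow 2 t).const_mul (-a)).exp.congr_deriv (by push_cast; ring)

lemma hasDerivAt_exp_neg_mul_sq_mul (hM : Differentiable ℝ M) (t : ℝ) :
    HasDerivAt (fun t => exp (-a * t ^ 2) * M t)
      (-2 * a * t * exp (-a * t ^ 2) * M t + exp (-a * t ^ 2) * deriv M t) t :=
  (hasDerivAt_exp_neg_mul_sq t).mul (hM t).hasDerivAt

lemma hasDerivAt_deriv_exp_neg_mul_sq_mul_zero (hM : Differentiable ℝ M) {m₂ : ℝ}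
    (hM₂ : HasDerivAt (deriv M) m₂ 0) :
    HasDerivAt (deriv fun t => exp (-a * t ^ 2) * M t) (m₂ - 2 * a * M 0) 0 := by
  rw [funext fun t => (hasDerivAt_exp_neg_mul_sq_mul (a := a) hM t).deriv]
  have hg : HasDerivAt (fun t : ℝ => -2 * a * t * exp (-a * t ^ 2)) (-2 * a) 0 :=
    (((hasDerivAt_id (0 : ℝ)).const_mul (-2 * a)).mul
      (hasDerivAt_exp_neg_mul_sq (a := a) 0)).congr_deriv (by simp)
  exact ((hg.mul (hM 0).hasDerivAt).add
    ((hasDerivAt_exp_neg_mul_sq (a := a) 0).mul hM₂)).congr_deriv (by simp; ring)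

lemma hasDerivAt_reflectionDefect_exp_neg_mul_sq_mul_mgf {Ω : Type*} [MeasurableSpace Ω]
    {X : Ω → ℝ} {ν : Measure Ω} (a : ℝ)
    (hX : ∀ t, Integrable (fun ω => exp (t * X ω)) ν) :
    HasDerivAt (reflectionDefect fun T => exp (-a * T ^ 2) * mgf X ν T) 0 0 ∧
      HasDerivAt (deriv (reflectionDefect fun T => exp (-a * T ^ 2) * mgf X ν T))
        (2 * (∫ ω, X ω ^ 2 ∂ν - 2 * a * ν.real Set.univ)) 0 := by
  have hint (t : ℝ) : t ∈ interior (integrableExpSet X ν) := by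
    simp [integrableExpSet, hX]
  have hM : Differentiable ℝ (mgf X ν) := fun t => differentiableAt_mgf (hint t)
  have hM₂ := hasDerivAt_iteratedDeriv_mgf (hint 0) 1
  simp only [iteratedDeriv_one, zero_mul, exp_zero, mul_one] at hM₂
  have hG : Differentiable ℝ fun T => exp (-a * T ^ 2) * mgf X ν T :=
    fun t => (hasDerivAt_exp_neg_mul_sq_mul hM t).differentiableAt
  refine ⟨(hasDerivAt_reflectionDefect hG 0).congr_deriv (by rw [mul_zero, sub_self]), ?_⟩
  simpa [mgf_zero'] using
    hasDerivAt_deriv_reflectionDefect_zero hG (hasDerivAt_deriv_exp_neg_mul_sq_mul_zero hM hM₂)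

end Calculus

lemma integrable_exp_mul_abs_sub_mul_sq {b : ℝ} (hb : 0 < b) (c : ℝ) :
    Integrable fun u : ℝ => exp (c * |u| - b * u ^ 2) := by
  refine ((integrable_exp_neg_mul_sq (half_pos hb)).const_mul (exp (c ^ 2 / (2 * b)))).mono'
    (by fun_prop) (ae_of_all _ fun u => ?_)
  rw [norm_of_nonneg (exp_pos _).le, ← exp_add, exp_le_exp]
  have hsq : c ^ 2 / (2 * b) + -(b / 2) * u ^ 2 - (c * |u| - b * u ^ 2)
      = (b * |u| - c) ^ 2 / (2 * b) := by
    field_simp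
    rw [← sq_abs u]
    ring
  have : 0 ≤ (b * |u| - c) ^ 2 / (2 * b) := by positivity
  linarith

section SpectralMeasure

variable {α : Type*} {lam : ℝ} {μ ρ : α → ℝ}

lemma integrable_prod_of_abs_le [MeasurableSpace α] {ν : Measure α} {S : Set α}
    (hS : MeasurableSet S) (hνS : ν S ≠ ⊤) {f : α × ℝ → ℝ}
    (hf : AEStronglyMeasurable f (ν.prod volume)) {b c C : ℝ} (hb : 0 < b)
    (hfS : ∀ p ∉ S, ∀ u, f (p, u) = 0)
    (hbound : ∀ p ∈ S, ∀ u, |f (p, u)| ≤ C * exp (c * |u| - b * u ^ 2)) :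
    Integrable f (ν.prod volume) := by
  have hS1 : Integrable (S.indicator fun _ => (1 : ℝ)) ν :=
    (integrable_indicator_iff hS).2 (integrableOn_const hνS)
  refine (hS1.mul_prod ((integrable_exp_mul_abs_sub_mul_sq hb c).const_mul C)).mono' hf
    (ae_of_all _ fun ⟨p, u⟩ => ?_)
  by_cases hp : p ∈ S
  · simpa [hp] using hbound p hp u
  · simp [hp, hfS p hp u]

lemma spectralWeight_nonneg (hρ : ∀ p, 0 ≤ ρ p) (x : α × ℝ) :
    0 ≤ spectralWeight lam μ ρ x := by
  unfold spectralWeight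
  have := hρ x.1
  positivity

lemma spectralWeight_neg_snd (x : α × ℝ) :
    spectralWeight lam μ ρ (x.1, -x.2) = spectralWeight lam μ ρ x := by
  simp [spectralWeight]

lemma spectralWeight_mul_exp_mul_shiftedEnergy (t : ℝ) (x : α × ℝ) :
    spectralWeight lam μ ρ x * exp (t * shiftedEnergy lam μ x) =
      ρ x.1 * exp (-x.2 ^ 2 / (4 * lam) + -2 * |x.2| * μ x.1 +
        t * (μ x.1 + x.2 / (2 * lam))) := by
  simp only [spectralWeight, shiftedEnergy, exp_add]
  ring

variable [MeasurableSpace α] {ν : Measure α}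

lemma measurable_spectralWeight (hμ : Measurable μ) (hρ : Measurable ρ) :
    Measurable (spectralWeight lam μ ρ) := by
  unfold spectralWeight
  fun_prop

lemma integrable_spectralMeasure_iff (hμ : Measurable μ) (hρ : Measurable ρ)
    (hρ₀ : ∀ p, 0 ≤ ρ p) {g : α × ℝ → ℝ} :
    Integrable g (spectralMeasure ν lam μ ρ) ↔
      Integrable (fun x => spectralWeight lam μ ρ x * g x) (ν.prod volume) := by
  rw [spectralMeasure, integrable_withDensity_iff_integrable_smul'
    (measurable_spectralWeight hμ hρ).ennreal_ofReal (ae_of_all _ fun _ => ENNReal.ofReal_lt_top)]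
  simp [ENNReal.toReal_ofReal (spectralWeight_nonneg hρ₀ _)]

lemma integral_spectralMeasure (hμ : Measurable μ) (hρ : Measurable ρ) (hρ₀ : ∀ p, 0 ≤ ρ p)
    (g : α × ℝ → ℝ) :
    ∫ x, g x ∂spectralMeasure ν lam μ ρ =
      ∫ x, spectralWeight lam μ ρ x * g x ∂ν.prod volume := by
  rw [spectralMeasure, integral_withDensity_eq_integral_toReal_smul
    (measurable_spectralWeight hμ hρ).ennreal_ofReal (ae_of_all _ fun _ => ENNReal.ofReal_lt_top)]
  simp [ENNReal.toReal_ofReal (spectralWeight_nonneg hρ₀ _)]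

lemma integral_integral_spectralWeight_mul [SFinite ν] (hμ : Measurable μ) (hρ : Measurable ρ)
    (hρ₀ : ∀ p, 0 ≤ ρ p) {g : α × ℝ → ℝ} (hg : Integrable g (spectralMeasure ν lam μ ρ)) :
    ∫ p, ∫ u, spectralWeight lam μ ρ (p, u) * g (p, u) ∂volume ∂ν =
      ∫ x, g x ∂spectralMeasure ν lam μ ρ := by
  rw [integral_spectralMeasure hμ hρ hρ₀]
  exact integral_integral ((integrable_spectralMeasure_iff hμ hρ hρ₀).1 hg)

lemma integrable_exp_mul_shiftedEnergy [TopologicalSpace α] [OpensMeasurableSpace α]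
    [IsFiniteMeasureOnCompacts ν] (hlam : 0 < lam) (hμ : Continuous μ) (hρ : Continuous ρ)
    (hρc : HasCompactSupport ρ) (hρ₀ : ∀ p, 0 ≤ ρ p) (t : ℝ) :
    Integrable (fun x => exp (t * shiftedEnergy lam μ x)) (spectralMeasure ν lam μ ρ) := by
  rw [integrable_spectralMeasure_iff hμ.measurable hρ.measurable hρ₀]
  obtain ⟨M, hM⟩ := hρc.isCompact.exists_bound_of_continuousOn hμ.continuousOn
  obtain ⟨R, hR⟩ := hρc.isCompact.exists_bound_of_continuousOn hρ.continuousOn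
  refine integrable_prod_of_abs_le (isClosed_tsupport ρ).measurableSet
    hρc.isCompact.measure_lt_top.ne ?_ (b := 1 / (4 * lam)) (c := 2 * M + |t| / (2 * lam))
    (C := R * exp (|t| * M)) (by positivity) (fun p hp u => ?_) (fun p hp u => ?_)
  · exact ((measurable_spectralWeight hμ.measurable hρ.measurable).mul
      (by unfold shiftedEnergy; fun_prop)).aestronglyMeasurable
  · simp [spectralWeight, image_eq_zero_of_notMem_tsupport hp]
  have hμp : |μ p| ≤ M := hM p hp
  have hρp : |ρ p| ≤ R := hR p hp
  have h1 : -2 * |u| * μ p ≤ 2 * |u| * M := by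
    nlinarith [abs_nonneg u, neg_abs_le (μ p)]
  have h2 : t * μ p ≤ |t| * M := by
    nlinarith [le_abs_self (t * μ p), abs_mul t (μ p), abs_nonneg t]
  have h3 : t * (u / (2 * lam)) ≤ |t| / (2 * lam) * |u| := by
    rw [mul_div_assoc', div_mul_eq_mul_div, ← abs_mul]
    exact div_le_div_of_nonneg_right (le_abs_self _) (by positivity)
  rw [spectralWeight_mul_exp_mul_shiftedEnergy, abs_mul, abs_of_pos (exp_pos _), mul_assoc R,
    ← exp_add]
  refine mul_le_mul hρp (exp_le_exp.2 ?_) (exp_pos _).le ((abs_nonneg _).trans hρp)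
  linarith [show -u ^ 2 / (4 * lam) = -(1 / (4 * lam) * u ^ 2) by ring]

lemma integral_integral_eq_exp_mul_mgf [SFinite ν] (hlam : lam ≠ 0) (hμ : Measurable μ)
    (hρ : Measurable ρ) (hρ₀ : ∀ p, 0 ≤ ρ p) {T : ℝ}
    (hT : Integrable (fun x => exp (T * shiftedEnergy lam μ x)) (spectralMeasure ν lam μ ρ)) :
    ∫ p, ∫ u, exp (-(T - u) ^ 2 / (4 * lam)) * exp (T * μ p) * exp (-2 * |u| * μ p) * ρ p
        ∂volume ∂ν =
      exp (-(1 / (4 * lam)) * T ^ 2) *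
        mgf (shiftedEnergy lam μ) (spectralMeasure ν lam μ ρ) T := by
  rw [mgf, ← integral_const_mul, ← integral_integral_spectralWeight_mul hμ hρ hρ₀
    (hT.const_mul _)]
  refine integral_congr_ae (ae_of_all _ fun p => integral_congr_ae (ae_of_all _ fun u => ?_))
  have hsq : exp (-(T - u) ^ 2 / (4 * lam)) * exp (T * μ p) =
      exp (-(1 / (4 * lam)) * T ^ 2) * exp (-u ^ 2 / (4 * lam)) *
        exp (T * (μ p + u / (2 * lam))) := by
    simp only [← exp_add]
    congr 1
    field_simp
    ring
  simp only [spectralWeight, shiftedEnergy]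
  rw [hsq]
  ring

lemma measurePreserving_neg_snd_spectralMeasure [SFinite ν] (hμ : Measurable μ)
    (hρ : Measurable ρ) :
    MeasurePreserving (Prod.map id (Neg.neg : ℝ → ℝ)) (spectralMeasure ν lam μ ρ)
      (spectralMeasure ν lam μ ρ) := by
  have hσ : MeasurePreserving (Prod.map id (Neg.neg : ℝ → ℝ)) (ν.prod volume)
      (ν.prod volume) :=
    (MeasurePreserving.id ν).prod (Measure.measurePreserving_neg volume)
  refine ⟨hσ.measurable, Measure.ext fun s hs => ?_⟩
  rw [Measure.map_apply hσ.measurable hs, spectralMeasure, withDensity_apply _ hs,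
    withDensity_apply _ (hσ.measurable hs)]
  have := hσ.setLIntegral_comp_preimage hs
    (measurable_spectralWeight (lam := lam) hμ hρ).ennreal_ofReal
  simpa [Prod.map, spectralWeight_neg_snd] using this

lemma integral_integral_spectralWeight_mul_eq [SFinite ν] (hlam : lam ≠ 0)
    (hμ : Measurable μ) (hρ : Measurable ρ) (hρ₀ : ∀ p, 0 ≤ ρ p)
    (hexp : ∀ t, Integrable (fun x => exp (t * shiftedEnergy lam μ x))
      (spectralMeasure ν lam μ ρ)) :
    ∫ p, ∫ u, exp (-u ^ 2 / (4 * lam)) * exp (-2 * |u| * μ p)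
        * (2 * μ p ^ 2 - 1 / lam + u ^ 2 / (2 * lam ^ 2)) * ρ p ∂volume ∂ν =
      2 * ∫ x, shiftedEnergy lam μ x ^ 2 ∂spectralMeasure ν lam μ ρ -
        (spectralMeasure ν lam μ ρ).real Set.univ / lam := by
  have : IsFiniteMeasure (spectralMeasure ν lam μ ρ) :=
    (integrable_const_iff_isFiniteMeasure one_ne_zero).1 (by simpa using hexp 0)
  have hX : Integrable (fun x => shiftedEnergy lam μ x ^ 2) (spectralMeasure ν lam μ ρ) :=
    integrable_pow_of_mem_interior_integrableExpSet (by simp [integrableExpSet, hexp]) 2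
  have hσ := measurePreserving_neg_snd_spectralMeasure (ν := ν) (lam := lam) hμ hρ
  have hemb : MeasurableEmbedding (Prod.map id (Neg.neg : ℝ → ℝ)) :=
    (MeasurableEquiv.prodCongr (.refl α) (.neg ℝ)).measurableEmbedding
  have hX' : Integrable (fun x => shiftedEnergy lam μ (Prod.map id Neg.neg x) ^ 2)
      (spectralMeasure ν lam μ ρ) :=
    (hσ.integrable_comp_emb hemb (g := fun x => shiftedEnergy lam μ x ^ 2)).2 hX
  have hsplit : (fun x : α × ℝ => 2 * μ x.1 ^ 2 - 1 / lam + x.2 ^ 2 / (2 * lam ^ 2)) =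
      fun x => shiftedEnergy lam μ x ^ 2 + shiftedEnergy lam μ (Prod.map id Neg.neg x) ^ 2
        - 1 / lam := by
    ext x
    simp only [shiftedEnergy, Prod.map, id]
    field_simp
    ring
  have hpoly : Integrable (fun x : α × ℝ => 2 * μ x.1 ^ 2 - 1 / lam + x.2 ^ 2 / (2 * lam ^ 2))
      (spectralMeasure ν lam μ ρ) := by
    rw [hsplit]
    exact (hX.add hX').sub (integrable_const _)
  calc _ = ∫ p, ∫ u, spectralWeight lam μ ρ (p, u) *
          (2 * μ p ^ 2 - 1 / lam + u ^ 2 / (2 * lam ^ 2)) ∂volume ∂ν := by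
        refine integral_congr_ae (ae_of_all _ fun p => integral_congr_ae (ae_of_all _ fun u => ?_))
        simp only [spectralWeight]
        ring
    _ = _ := by
        refine (integral_integral_spectralWeight_mul hμ hρ hρ₀ hpoly).trans ?_
        rw [hsplit, integral_sub (by exact hX.add hX') (integrable_const _), integral_add hX hX',
          hσ.integral_comp hemb (fun x => shiftedEnergy lam μ x ^ 2), integral_const, smul_eq_mul]
        ring

end SpectralMeasure

theorem stmt_11_general (d : ℕ) (lam m : ℝ) (hlam : 0 < lam)
    (μ : EuclideanSpace ℝ (Fin (d - 1)) → ℝ)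
    (hμ : ∀ p, μ p = Real.sqrt (‖p‖ ^ 2 + m ^ 2))
    (ρ : EuclideanSpace ℝ (Fin (d - 1)) → ℝ)
    (hρcont : Continuous ρ) (hρsupp : HasCompactSupport ρ)
    (hρpos : ∀ p, 0 ≤ ρ p)
    (G : ℝ → ℝ)
    (hG : ∀ T : ℝ, G T = ∫ p : EuclideanSpace ℝ (Fin (d - 1)), ∫ u : ℝ,
      Real.exp (-(T - u) ^ 2 / (4 * lam)) * Real.exp (T * μ p)
        * Real.exp (-2 * |u| * μ p) * ρ p)
    (H : ℝ → ℝ)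
    (hH : ∀ T : ℝ, H T = G 0 + G (2 * T) - 2 * G T) :
    DifferentiableAt ℝ H 0 ∧ DifferentiableAt ℝ (deriv H) 0 ∧
      H 0 = 0 ∧ deriv H 0 = 0 ∧
      deriv (deriv H) 0 = ∫ p : EuclideanSpace ℝ (Fin (d - 1)), ∫ u : ℝ,
        Real.exp (-u ^ 2 / (4 * lam)) * Real.exp (-2 * |u| * μ p)
          * (2 * μ p ^ 2 - 1 / lam + u ^ 2 / (2 * lam ^ 2)) * ρ p := by
  obtain rfl : H = reflectionDefect G := funext hH
  have hμc : Continuous μ := by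
    rw [funext hμ]
    fun_prop
  set ν := spectralMeasure volume lam μ ρ
  have hexp (t : ℝ) : Integrable (fun x => exp (t * shiftedEnergy lam μ x)) ν :=
    integrable_exp_mul_shiftedEnergy hlam hμc hρcont hρsupp hρpos t
  obtain rfl : G = fun T => exp (-(1 / (4 * lam)) * T ^ 2) * mgf (shiftedEnergy lam μ) ν T :=
    funext fun T => (hG T).trans (integral_integral_eq_exp_mul_mgf hlam.ne' hμc.measurable
      hρcont.measurable hρpos (hexp T))
  obtain ⟨hH₁, hH₂⟩ := hasDerivAt_reflectionDefect_exp_neg_mul_sq_mul_mgf (1 / (4 * lam)) hexp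
  refine ⟨hH₁.differentiableAt, hH₂.differentiableAt, reflectionDefect_zero _, hH₁.deriv, ?_⟩
  rw [hH₂.deriv, integral_integral_spectralWeight_mul_eq hlam.ne' hμc.measurable
    hρcont.measurable hρpos hexp]
  field_simp
  ring

/-- Taylor expansion at `T = 0` of the reflection-positivity defect function
`H(T) = G(0) + G(2T) - 2G(T)` arising from the covariance `D_λ` of the
stochastic-quantization measure in space-time dimension `d ≥ 2`. -/
theorem stmt_11 (d : ℕ) (hd : 2 ≤ d) (lam m : ℝ) (hlam : 0 < lam) (hm : 0 < m)
    (μ : EuclideanSpace ℝ (Fin (d - 1)) → ℝ)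
    (hμ : ∀ p, μ p = Real.sqrt (‖p‖ ^ 2 + m ^ 2))
    (ρ : EuclideanSpace ℝ (Fin (d - 1)) → ℝ)
    (hρcont : Continuous ρ) (hρsupp : HasCompactSupport ρ)
    (hρpos : ∀ p, 0 ≤ ρ p)
    (G : ℝ → ℝ)
    (hG : ∀ T : ℝ, G T = ∫ p : EuclideanSpace ℝ (Fin (d - 1)), ∫ u : ℝ,
      Real.exp (-(T - u) ^ 2 / (4 * lam)) * Real.exp (T * μ p)
        * Real.exp (-2 * |u| * μ p) * ρ p)
    (H : ℝ → ℝ)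
    (hH : ∀ T : ℝ, H T = G 0 + G (2 * T) - 2 * G T) :
    DifferentiableAt ℝ H 0 ∧ DifferentiableAt ℝ (deriv H) 0 ∧
      H 0 = 0 ∧ deriv H 0 = 0 ∧
      deriv (deriv H) 0 = ∫ p : EuclideanSpace ℝ (Fin (d - 1)), ∫ u : ℝ,
        Real.exp (-u ^ 2 / (4 * lam)) * Real.exp (-2 * |u| * μ p)
          * (2 * μ p ^ 2 - 1 / lam + u ^ 2 / (2 * lam ^ 2)) * ρ p :=
  stmt_11_general d lam m hlam μ hμ ρ hρcont hρsupp hρpos G hG H hH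
end
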